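/- Suppose the random graph process {G_k} is stochastically uniformly quasi-strongly connected and P_{k+1} ≤ P_k for all k. Then the randomized consensus algorithm achieves global almost sure consensus if ∑_{k=0}^∞ P_k^{n−1} = ∞. -/

import Mathlib

open MeasureTheory ProbabilityTheory Filter

/-- The randomized consensus process over a random graph process, as in the paper:
`n` nodes, a random digraph process `E`, random weights `a` satisfying the weights
rule with constant `η`, and Bernoulli update decisions `χ` with success probabilities
`P k`, independent of everything else. -/
structure RandConsensus (Ω : Type*) [MeasurableSpace Ω] where
  /-- number of nodes -/
  n : ℕ
  hn : 2 ≤ n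
  μ : Measure Ω
  hμ : IsProbabilityMeasure μ
  /-- the random graph process: `E k ω u v` iff the arc `(u,v)` is present at time `k`. -/
  E : ℕ → Ω → Fin n → Fin n → Bool
  hE : ∀ k u v, Measurable fun ω => E k ω u v
  /-- arcs join two different nodes -/
  hEirrefl : ∀ k ω u, E k ω u u = false
  /-- success probabilities -/
  P : ℕ → ℝ
  hP0 : ∀ k, 0 ≤ P k
  hP1 : ∀ k, P k < 1
  /-- Bernoulli decisions: node `i` takes the averaging update at time `k` iff `χ k i ω`. -/
  χ : ℕ → Fin n → Ω → Bool
  hχ : ∀ k i, Measurable (χ k i)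
  hχP : ∀ k i, μ {ω | χ k i ω = true} = ENNReal.ofReal (P k)
  /-- the random averaging weights -/
  a : ℕ → Fin n → Fin n → Ω → ℝ
  ha : ∀ k i j, Measurable (a k i j)
  /-- weights-rule constant -/
  η : ℝ
  hη : 0 < η
  hηa : ∀ k i ω, ∀ j ∈ insert i (Finset.univ.filter fun j' => E k ω j' i = true),
    η ≤ a k i j ω
  hasum : ∀ k i ω, ∑ j ∈ insert i (Finset.univ.filter fun j' => E k ω j' i = true),
    a k i j ω = 1
  /-- the Bernoulli decisions are mutually independent (over all times and nodes) -/
  hχindep : iIndepFun (fun (p : ℕ × Fin n) ω => χ p.1 p.2 ω) μ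
  /-- the whole family of Bernoulli decisions is independent of the graph-and-weights process -/
  hχext : IndepFun (fun ω (p : ℕ × Fin n) => χ p.1 p.2 ω)
    (fun ω => ((fun k u v => E k ω u v), (fun k i j => a k i j ω))) μ

namespace RandConsensus

variable {Ω : Type*} [MeasurableSpace Ω] (S : RandConsensus Ω)

/-- The neighbor set `N_i(k)` (including `i` itself). -/
def Nbr (k : ℕ) (ω : Ω) (i : Fin S.n) : Finset (Fin S.n) :=
  insert i (Finset.univ.filter fun j => S.E k ω j i = true)

/-- The (random) state process driven by the algorithm from initial condition `x0`. -/
def state (x0 : Fin S.n → ℝ) : ℕ → Ω → Fin S.n → ℝ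
  | 0, _ => x0
  | k + 1, ω => fun i =>
      if S.χ k i ω then ∑ j ∈ S.Nbr k ω i, S.a k i j ω * state x0 k ω j
      else state x0 k ω i

/-- `𝓗 v = max_i v_i - min_i v_i`. -/
def spread (v : Fin S.n → ℝ) : ℝ :=
  Finset.univ.sup' ⟨⟨0, by have := S.hn; omega⟩, Finset.mem_univ _⟩ v -
    Finset.univ.inf' ⟨⟨0, by have := S.hn; omega⟩, Finset.mem_univ _⟩ v

/-- Global almost sure consensus. -/
def consensus : Prop :=
  ∀ x0 : Fin S.n → ℝ,
    S.μ {ω | Tendsto (fun k => S.spread (S.state x0 k ω)) atTop (nhds 0)} = 1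

/-- The `ε`-computation time. -/
noncomputable def Tcom (ε : ℝ) : ℕ∞ :=
  ⨆ x0 : Fin S.n → ℝ,
    ⨅ k ∈ {k : ℕ | S.μ {ω | ε ≤ S.spread (S.state x0 k ω) / S.spread x0}
      ≤ ENNReal.ofReal ε}, (k : ℕ∞)

/-- The arc relation of the graph at time `k`. -/
def arcRel (k : ℕ) (ω : Ω) : Fin S.n → Fin S.n → Prop := fun u v => S.E k ω u v = true

/-- The arc relation of the joint graph over a set of times. -/
def jointRel (ω : Ω) (s : Set ℕ) : Fin S.n → Fin S.n → Prop :=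
  fun u v => ∃ k ∈ s, S.E k ω u v = true

end RandConsensus

/-- A digraph is quasi-strongly connected if it has a root. -/
def IsQSC {n : ℕ} (rel : Fin n → Fin n → Prop) : Prop :=
  ∃ r, ∀ j, Relation.ReflTransGen rel r j

/-- A (bidirectional) digraph is connected if every node is reachable from every node. -/
def IsConn {n : ℕ} (rel : Fin n → Fin n → Prop) : Prop :=
  ∀ i j, Relation.ReflTransGen rel i j

/-- A digraph is acyclic if it has no directed cycle. -/
def IsAcyclicRel {n : ℕ} (rel : Fin n → Fin n → Prop) : Prop :=
  ∀ v, ¬ Relation.TransGen rel v v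

namespace RandConsensus

variable {Ω : Type*} [MeasurableSpace Ω] (S : RandConsensus Ω)

lemma n_pos : 0 < S.n := by have := S.hn; omega

lemma univ_nonempty : (Finset.univ : Finset (Fin S.n)).Nonempty :=
  ⟨⟨0, S.n_pos⟩, Finset.mem_univ _⟩

noncomputable def maxF (v : Fin S.n → ℝ) : ℝ := Finset.univ.sup' S.univ_nonempty v
noncomputable def minF (v : Fin S.n → ℝ) : ℝ := Finset.univ.inf' S.univ_nonempty v

lemma spread_eq (v : Fin S.n → ℝ) : S.spread v = S.maxF v - S.minF v := rfl

lemma le_maxF (v : Fin S.n → ℝ) (i : Fin S.n) : v i ≤ S.maxF v :=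
  Finset.le_sup' v (Finset.mem_univ i)

lemma minF_le (v : Fin S.n → ℝ) (i : Fin S.n) : S.minF v ≤ v i :=
  Finset.inf'_le v (Finset.mem_univ i)

lemma maxF_le (v : Fin S.n → ℝ) {c : ℝ} (h : ∀ i, v i ≤ c) : S.maxF v ≤ c :=
  Finset.sup'_le _ _ fun i _ => h i

lemma le_minF (v : Fin S.n → ℝ) {c : ℝ} (h : ∀ i, c ≤ v i) : c ≤ S.minF v :=
  Finset.le_inf' _ _ fun i _ => h i

lemma minF_le_maxF (v : Fin S.n → ℝ) : S.minF v ≤ S.maxF v :=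
  le_trans (S.minF_le v ⟨0, S.n_pos⟩) (S.le_maxF v ⟨0, S.n_pos⟩)

lemma spread_nonneg (v : Fin S.n → ℝ) : 0 ≤ S.spread v := by
  rw [S.spread_eq]; linarith [S.minF_le_maxF v]

lemma maxF_neg (v : Fin S.n → ℝ) : S.maxF (-v) = - S.minF v := by
  apply le_antisymm
  · apply S.maxF_le; intro i
    simp only [Pi.neg_apply, neg_le_neg_iff]
    exact S.minF_le v i
  · rw [neg_le]
    apply S.le_minF; intro i
    rw [← neg_le]
    exact S.le_maxF (-v) i

lemma minF_neg (v : Fin S.n → ℝ) : S.minF (-v) = - S.maxF v := by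
  have := S.maxF_neg (-v); rw [neg_neg] at this; linarith

lemma spread_neg (v : Fin S.n → ℝ) : S.spread (-v) = S.spread v := by
  rw [S.spread_eq, S.spread_eq, S.maxF_neg, S.minF_neg]; ring

lemma mem_Nbr_self (k : ℕ) (ω : Ω) (i : Fin S.n) : i ∈ S.Nbr k ω i :=
  Finset.mem_insert_self _ _

lemma mem_Nbr_of_arc {k : ℕ} {ω : Ω} {i j : Fin S.n} (h : S.E k ω j i = true) :
    j ∈ S.Nbr k ω i := by
  unfold Nbr
  exact Finset.mem_insert_of_mem (by simp [h])

lemma a_nonneg (k : ℕ) (ω : Ω) (i : Fin S.n) {j : Fin S.n} (hj : j ∈ S.Nbr k ω i) :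
    0 ≤ S.a k i j ω := le_trans S.hη.le (S.hηa k i ω j hj)

lemma Nbr_asum (k : ℕ) (i : Fin S.n) (ω : Ω) : ∑ j ∈ S.Nbr k ω i, S.a k i j ω = 1 :=
  S.hasum k i ω

lemma exists_omega {Ω' : Type*} [MeasurableSpace Ω'] (S' : RandConsensus Ω') :
    Nonempty Ω' := by
  by_contra h
  have h1 : (S'.μ Set.univ) = 1 := S'.hμ.measure_univ
  rw [Set.univ_eq_empty_iff.2 (by simpa using h), measure_empty] at h1
  exact zero_ne_one h1

lemma eta_le_one : S.η ≤ 1 := by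
  obtain ⟨ω⟩ := S.exists_omega
  set i : Fin S.n := ⟨0, S.n_pos⟩
  have hsum := S.hasum 0 i ω
  have h1 : S.a 0 i i ω ≤ 1 := by
    rw [← hsum]
    exact Finset.single_le_sum (fun j hj => S.a_nonneg 0 ω i hj) (S.mem_Nbr_self 0 ω i)
  exact le_trans (S.hηa 0 i ω i (S.mem_Nbr_self 0 ω i)) h1

lemma state_succ (x0 : Fin S.n → ℝ) (k : ℕ) (ω : Ω) (i : Fin S.n) :
    S.state x0 (k+1) ω i = if S.χ k i ω then ∑ j ∈ S.Nbr k ω i, S.a k i j ω * S.state x0 k ω j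
      else S.state x0 k ω i := rfl

lemma state_le_max (x0 : Fin S.n → ℝ) (k : ℕ) (ω : Ω) {M : ℝ}
    (hub : ∀ j, S.state x0 k ω j ≤ M) (i : Fin S.n) : S.state x0 (k+1) ω i ≤ M := by
  rw [S.state_succ]
  split
  · calc ∑ j ∈ S.Nbr k ω i, S.a k i j ω * S.state x0 k ω j
        ≤ ∑ j ∈ S.Nbr k ω i, S.a k i j ω * M := by
          apply Finset.sum_le_sum
          intro j hj
          exact mul_le_mul_of_nonneg_left (hub j) (S.a_nonneg k ω i hj)
      _ = M := by rw [← Finset.sum_mul, S.Nbr_asum k i ω, one_mul]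
  · exact hub i

lemma maxF_state_succ_le (x0 : Fin S.n → ℝ) (k : ℕ) (ω : Ω) :
    S.maxF (S.state x0 (k+1) ω) ≤ S.maxF (S.state x0 k ω) :=
  S.maxF_le _ (S.state_le_max x0 k ω (S.le_maxF _))

lemma state_neg (x0 : Fin S.n → ℝ) (k : ℕ) (ω : Ω) :
    S.state (-x0) k ω = - S.state x0 k ω := by
  induction k with
  | zero => rfl
  | succ k ih =>
    funext i
    rw [Pi.neg_apply, S.state_succ, S.state_succ, ih]
    split
    · rw [← Finset.sum_neg_distrib]
      exact Finset.sum_congr rfl fun j _ => by rw [Pi.neg_apply]; ring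
    · rw [Pi.neg_apply]

lemma minF_state_succ_le (x0 : Fin S.n → ℝ) (k : ℕ) (ω : Ω) :
    S.minF (S.state x0 k ω) ≤ S.minF (S.state x0 (k+1) ω) := by
  have h := S.maxF_state_succ_le (-x0) k ω
  rw [S.state_neg, S.state_neg, S.maxF_neg, S.maxF_neg] at h
  linarith

lemma maxF_state_mono (x0 : Fin S.n → ℝ) (ω : Ω) {k k' : ℕ} (h : k ≤ k') :
    S.maxF (S.state x0 k' ω) ≤ S.maxF (S.state x0 k ω) := by
  induction k' with
  | zero => simp_all
  | succ m ih =>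
    rcases Nat.lt_or_ge k (m+1) with hk | hk
    · exact le_trans (S.maxF_state_succ_le x0 m ω) (ih (by omega))
    · have : k = m + 1 := by omega
      subst this; rfl

lemma minF_state_mono (x0 : Fin S.n → ℝ) (ω : Ω) {k k' : ℕ} (h : k ≤ k') :
    S.minF (S.state x0 k ω) ≤ S.minF (S.state x0 k' ω) := by
  have h2 := S.maxF_state_mono (-x0) ω h
  rw [S.state_neg, S.state_neg, S.maxF_neg, S.maxF_neg] at h2
  linarith

lemma spread_state_mono (x0 : Fin S.n → ℝ) (ω : Ω) {k k' : ℕ} (h : k ≤ k') :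
    S.spread (S.state x0 k' ω) ≤ S.spread (S.state x0 k ω) := by
  rw [S.spread_eq, S.spread_eq]
  have := S.maxF_state_mono x0 ω h
  have := S.minF_state_mono x0 ω h
  linarith

/-- If node `i` updates at time `k` and some neighbor `j₀` has slack `c` below the
global upper bound `M`, then `i` has slack `η c` at time `k+1`. -/
lemma update_slack (x0 : Fin S.n → ℝ) (k : ℕ) (ω : Ω) {i j₀ : Fin S.n} {M c : ℝ}
    (hχt : S.χ k i ω = true) (hj : j₀ ∈ S.Nbr k ω i)
    (hub : ∀ j, S.state x0 k ω j ≤ M) (hc : 0 ≤ c)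
    (hj0 : S.state x0 k ω j₀ ≤ M - c) :
    S.state x0 (k+1) ω i ≤ M - S.η * c := by
  rw [S.state_succ, if_pos hχt]
  have herase : S.a k i j₀ ω * S.state x0 k ω j₀
      + ∑ j ∈ (S.Nbr k ω i).erase j₀, S.a k i j ω * S.state x0 k ω j
      = ∑ j ∈ S.Nbr k ω i, S.a k i j ω * S.state x0 k ω j :=
    Finset.add_sum_erase _ (fun j => S.a k i j ω * S.state x0 k ω j) hj
  have hs2 : ∑ j ∈ (S.Nbr k ω i).erase j₀, S.a k i j ω * S.state x0 k ω j
      ≤ (1 - S.a k i j₀ ω) * M := by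
    have : ∑ j ∈ (S.Nbr k ω i).erase j₀, S.a k i j ω * S.state x0 k ω j
        ≤ ∑ j ∈ (S.Nbr k ω i).erase j₀, S.a k i j ω * M := by
      apply Finset.sum_le_sum
      intro j hjm
      exact mul_le_mul_of_nonneg_left (hub j) (S.a_nonneg k ω i (Finset.mem_of_mem_erase hjm))
    rw [← Finset.sum_mul] at this
    have hsumerase : ∑ j ∈ (S.Nbr k ω i).erase j₀, S.a k i j ω = 1 - S.a k i j₀ ω := by
      have h1 := Finset.add_sum_erase (S.Nbr k ω i) (fun j => S.a k i j ω) hj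
      have h2 := S.Nbr_asum k i ω
      linarith
    rw [hsumerase] at this
    exact this
  have ha1 : S.a k i j₀ ω * S.state x0 k ω j₀ ≤ S.a k i j₀ ω * (M - c) :=
    mul_le_mul_of_nonneg_left hj0 (S.a_nonneg k ω i hj)
  have hηj : S.η ≤ S.a k i j₀ ω := S.hηa k i ω j₀ hj
  have hηc : S.η * c ≤ S.a k i j₀ ω * c := mul_le_mul_of_nonneg_right hηj hc
  nlinarith [herase, hs2, ha1]

/-- Slack persists, decaying by a factor `η` each step, regardless of updates. -/
lemma slack_step (x0 : Fin S.n → ℝ) (k : ℕ) (ω : Ω) {i : Fin S.n} {M c : ℝ}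
    (hub : ∀ j, S.state x0 k ω j ≤ M) (hc : 0 ≤ c)
    (hi : S.state x0 k ω i ≤ M - c) :
    S.state x0 (k+1) ω i ≤ M - S.η * c := by
  rcases hb : S.χ k i ω with _ | _
  · rw [S.state_succ, if_neg (by simp [hb])]
    have : S.η * c ≤ c := by nlinarith [S.eta_le_one, S.hη.le]
    linarith
  · exact S.update_slack x0 k ω hb (S.mem_Nbr_self k ω i) hub hc hi

/-- Infection: if an arc `j₀ → i` is present at time `k`, `i` updates, and `j₀` has
slack `c`, then `i` gets slack `η c`. -/
lemma infect_step (x0 : Fin S.n → ℝ) (k : ℕ) (ω : Ω) {i j₀ : Fin S.n} {M c : ℝ}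
    (harc : S.E k ω j₀ i = true) (hχt : S.χ k i ω = true)
    (hub : ∀ j, S.state x0 k ω j ≤ M) (hc : 0 ≤ c)
    (hj0 : S.state x0 k ω j₀ ≤ M - c) :
    S.state x0 (k+1) ω i ≤ M - S.η * c :=
  S.update_slack x0 k ω hχt (S.mem_Nbr_of_arc harc) hub hc hj0

end RandConsensus
namespace RandConsensus

variable {Ω : Type*} [MeasurableSpace Ω] (S : RandConsensus Ω)

/-- Core contraction estimate: if the value at a "root" node `r` has slack `c` below the
running maximum at time `s`, and there is a time-respecting broadcast schedule of arc
receptions (each with a successful update decision) covering all nodes within `T'` steps,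
then every node has slack `η^T' c` at time `s + T'`. -/
lemma core_contract (x0 : Fin S.n → ℝ) (ω : Ω) (s T' : ℕ) (r : Fin S.n) {c : ℝ}
    (hc : 0 ≤ c) (m : ℕ) (tf : ℕ → ℕ) (vf uf : ℕ → Fin S.n)
    (hr : S.state x0 s ω r ≤ S.maxF (S.state x0 s ω) - c)
    (ht : ∀ l, l < m → tf l < T')
    (hmono : ∀ l l', l < l' → l' < m → tf l < tf l')
    (harc : ∀ l, l < m → S.E (s + tf l) ω (uf l) (vf l) = true)
    (hχc : ∀ l, l < m → S.χ (s + tf l) (vf l) ω = true)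
    (hsend : ∀ l, l < m → uf l = r ∨ ∃ l', l' < l ∧ vf l' = uf l)
    (hcov : ∀ i, i = r ∨ ∃ l, l < m ∧ vf l = i) :
    ∀ i, S.state x0 (s + T') ω i ≤ S.maxF (S.state x0 s ω) - S.η ^ T' * c := by
  set M := S.maxF (S.state x0 s ω) with hM
  have hkey : ∀ τ, τ ≤ T' → ∀ i, (i = r ∨ ∃ l, l < m ∧ vf l = i ∧ tf l < τ) →
      S.state x0 (s + τ) ω i ≤ M - S.η ^ τ * c := by
    intro τ
    induction τ with
    | zero =>
      intro _ i hi
      rcases hi with rfl | ⟨l, _, _, hlt⟩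
      · simpa using hr
      · omega
    | succ τ ih =>
      intro hτ i hi
      have hτ' : τ ≤ T' := by omega
      have hub : ∀ j, S.state x0 (s + τ) ω j ≤ M := by
        intro j
        exact le_trans (S.le_maxF _ j) (S.maxF_state_mono x0 ω (Nat.le_add_right s τ))
      have hcnn : (0:ℝ) ≤ S.η ^ τ * c := mul_nonneg (pow_nonneg S.hη.le τ) hc
      have hstep : S.η * (S.η ^ τ * c) = S.η ^ (τ+1) * c := by ring
      have hInf : (i = r ∨ ∃ l, l < m ∧ vf l = i ∧ tf l < τ) ∨
          (∃ l, l < m ∧ vf l = i ∧ tf l = τ) := by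
        rcases hi with rfl | ⟨l, hlm, hv, hlt⟩
        · exact Or.inl (Or.inl rfl)
        · rcases Nat.lt_or_ge (tf l) τ with h | h
          · exact Or.inl (Or.inr ⟨l, hlm, hv, h⟩)
          · exact Or.inr ⟨l, hlm, hv, by omega⟩
      have hadd : s + (τ + 1) = (s + τ) + 1 := by omega
      rcases hInf with hold | ⟨l, hlm, hv, hteq⟩
      · have hb := ih hτ' i hold
        have := S.slack_step x0 (s+τ) ω hub hcnn hb
        rw [hadd, hstep] at *
        exact this.trans_eq (by rw [hstep])
      · have hu : S.state x0 (s + τ) ω (uf l) ≤ M - S.η ^ τ * c := by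
          apply ih hτ' (uf l)
          rcases hsend l hlm with h | ⟨l', hl', hv'⟩
          · exact Or.inl h
          · exact Or.inr ⟨l', by omega, hv', by have := hmono l' l hl' hlm; omega⟩
        have harc' : S.E (s + τ) ω (uf l) (vf l) = true := by rw [← hteq]; exact harc l hlm
        have hχ' : S.χ (s + τ) (vf l) ω = true := by rw [← hteq]; exact hχc l hlm
        rw [hv] at harc' hχ'
        have := S.infect_step x0 (s+τ) ω harc' hχ' hub hcnn hu
        rw [hadd]
        exact this.trans_eq (by rw [hstep])
  intro i
  rw [show s + T' = s + T' from rfl]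
  apply hkey T' le_rfl i
  rcases hcov i with h | ⟨l, hlm, hv⟩
  · exact Or.inl h
  · exact Or.inr ⟨l, hlm, hv, ht l hlm⟩

/-- From a rooted digraph, any set containing the root and not everything has an exit arc. -/
lemma exists_exit {n : ℕ} {rel : Fin n → Fin n → Prop} {r : Fin n}
    (hr : ∀ j, Relation.ReflTransGen rel r j) (U : Finset (Fin n)) (hrU : r ∈ U)
    (hU : U ≠ Finset.univ) : ∃ u ∈ U, ∃ v, v ∉ U ∧ rel u v := by
  by_contra hno
  push_neg at hno
  have hall : ∀ j, Relation.ReflTransGen rel r j → j ∈ U := by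
    intro j hj
    induction hj with
    | refl => exact hrU
    | @tail b cnode h1 h2 ih =>
      by_contra hv
      exact (hno b ih cnode hv) h2
  exact hU (Finset.eq_univ_of_forall fun j => hall j (hr j))

end RandConsensus
namespace RandConsensus

variable {Ω : Type*} [MeasurableSpace Ω] (S : RandConsensus Ω)

/-- Length (in time steps) of one "epoch": `n(n-1)` windows of length `B`. -/
def blkT (B : ℕ) : ℕ := S.n * (S.n - 1) * B

/-- Number of windows per epoch. -/
def nW : ℕ := S.n * (S.n - 1)

lemma blkT_eq (B : ℕ) : S.blkT B = S.nW * B := rfl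

/-- The type of graph-process realizations over one epoch. -/
abbrev Blk (B : ℕ) := Fin (S.blkT B) → Fin S.n → Fin S.n → Bool

/-- Extension of an epoch realization to all of `ℕ` (by `false` outside). -/
def gext (B : ℕ) (g : S.Blk B) : ℕ → Fin S.n → Fin S.n → Bool :=
  fun t => if h : t < S.blkT B then g ⟨t, h⟩ else fun _ _ => false

/-- The realization of the graph process over epoch `ℓ`. -/
def blkOf (B ℓ : ℕ) (ω : Ω) : S.Blk B := fun t u v => S.E (ℓ * S.blkT B + t) ω u v

/-- The joint graph of window `w` inside an epoch realization. -/
def winRel (B : ℕ) (g : S.Blk B) (w : ℕ) : Fin S.n → Fin S.n → Prop :=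
  fun u v => ∃ t : ℕ, w * B ≤ t ∧ t < (w + 1) * B ∧ S.gext B g t u v = true

/-- A good epoch realization: every window's joint graph is quasi-strongly connected. -/
def goodBlk (B : ℕ) (g : S.Blk B) : Prop := ∀ w, w < S.nW → IsQSC (S.winRel B g w)

lemma exists_root_fiber (f : ℕ → Fin S.n) :
    ∃ r : Fin S.n, S.n - 1 ≤ ((Finset.range S.nW).filter (fun w => f w = r)).card := by
  by_contra h
  push_neg at h
  have hn := S.hn
  have hcard : (Finset.range S.nW).card =
      ∑ r : Fin S.n, ((Finset.range S.nW).filter (fun w => f w = r)).card :=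
    Finset.card_eq_sum_card_fiberwise (fun x _ => Finset.mem_univ (f x))
  have hle : ∑ r : Fin S.n, ((Finset.range S.nW).filter (fun w => f w = r)).card
      ≤ ∑ _r : Fin S.n, (S.n - 2) := by
    apply Finset.sum_le_sum
    intro r _
    have := h r
    omega
  rw [Finset.sum_const, Finset.card_univ, Fintype.card_fin, smul_eq_mul] at hle
  rw [Finset.card_range] at hcard
  have hnw : S.nW = S.n * (S.n - 1) := rfl
  have hlt : S.n * (S.n - 2) < S.n * (S.n - 1) :=
    mul_lt_mul_of_pos_left (by omega) (by omega)
  omega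

lemma infected_card (r : Fin S.n) (vf : ℕ → Fin S.n) :
    ∀ m, (∀ l, l < m → vf l ≠ r ∧ ∀ l', l' < l → vf l' ≠ vf l) →
      (insert r ((Finset.range m).image vf)).card = m + 1 := by
  intro m
  induction m with
  | zero => simp
  | succ m ih =>
    intro hp
    have hins : insert r ((Finset.range (m+1)).image vf)
        = insert (vf m) (insert r ((Finset.range m).image vf)) := by
      rw [Finset.range_add_one, Finset.image_insert, Finset.insert_comm]
    rw [hins, Finset.card_insert_of_notMem, ih (fun l hl => hp l (by omega))]
    intro hmem
    rcases Finset.mem_insert.1 hmem with h | h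
    · exact (hp m (by omega)).1 h
    · obtain ⟨l', hl', hv⟩ := Finset.mem_image.1 h
      exact (hp m (by omega)).2 l' (Finset.mem_range.1 hl') hv

/-- Existence of a "plan": for each good epoch realization, a set of at most `n-1`
(time, node) pairs such that, whenever the epoch realization occurs and the planned
update decisions all succeed, the spread contracts by the fixed factor `1 - η^T/2`. -/
lemma exists_plan (B : ℕ) (hB : 1 ≤ B) (g : S.Blk B) (hg : S.goodBlk B g) :
    ∃ F : Finset (ℕ × Fin S.n), F.card ≤ S.n - 1 ∧ (∀ p ∈ F, p.1 < S.blkT B) ∧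
      ∀ (ℓ : ℕ) (ω : Ω) (x0 : Fin S.n → ℝ), S.blkOf B ℓ ω = g →
        (∀ p ∈ F, S.χ (ℓ * S.blkT B + p.1) p.2 ω = true) →
        S.spread (S.state x0 ((ℓ + 1) * S.blkT B) ω) ≤
          (1 - S.η ^ S.blkT B / 2) * S.spread (S.state x0 (ℓ * S.blkT B) ω) := by
  classical
  have hn := S.hn
  -- roots of the windows
  set f : ℕ → Fin S.n := fun w => if h : w < S.nW then (hg w h).choose else ⟨0, S.n_pos⟩
    with hf
  have hroot : ∀ w, w < S.nW → ∀ j, Relation.ReflTransGen (S.winRel B g w) (f w) j := by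
    intro w hw j
    simp only [hf, dif_pos hw]
    exact (hg w hw).choose_spec j
  obtain ⟨r, hrfib⟩ := S.exists_root_fiber f
  obtain ⟨s', hsub, hcard⟩ := Finset.exists_subset_card_eq hrfib
  set e := s'.orderEmbOfFin hcard with he
  set ew : ℕ → ℕ := fun l => if h : l < S.n - 1 then e ⟨l, h⟩ else 0 with hew
  have hew_mem : ∀ l, l < S.n - 1 → ew l < S.nW ∧ f (ew l) = r := by
    intro l hl
    have hmem : e ⟨l, hl⟩ ∈ s' := s'.orderEmbOfFin_mem hcard _
    have := hsub hmem
    rw [Finset.mem_filter, Finset.mem_range] at this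
    simp only [hew, dif_pos hl]
    exact this
  have hew_mono : ∀ l l', l < l' → l' < S.n - 1 → ew l < ew l' := by
    intro l l' hll hl'
    have hl : l < S.n - 1 := by omega
    simp only [hew, dif_pos hl, dif_pos hl']
    exact (OrderEmbedding.lt_iff_lt e).2 (by exact hll)
  -- build the broadcast schedule
  have build : ∀ m, m ≤ S.n - 1 → ∃ (tf : ℕ → ℕ) (vf uf : ℕ → Fin S.n),
      ∀ l, l < m → (ew l * B ≤ tf l ∧ tf l < (ew l + 1) * B) ∧
        S.gext B g (tf l) (uf l) (vf l) = true ∧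
        (uf l = r ∨ ∃ l', l' < l ∧ vf l' = uf l) ∧
        vf l ≠ r ∧ ∀ l', l' < l → vf l' ≠ vf l := by
    intro m
    induction m with
    | zero => exact fun _ => ⟨fun _ => 0, fun _ => r, fun _ => r, fun l hl => by omega⟩
    | succ m ih =>
      intro hm1
      obtain ⟨tf, vf, uf, hprops⟩ := ih (by omega)
      set U : Finset (Fin S.n) := insert r ((Finset.range m).image vf) with hU
      have hUcard : U.card = m + 1 :=
        S.infected_card r vf m (fun l hl => (hprops l hl).2.2.2)
      have hUne : U ≠ Finset.univ := by
        intro hEq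
        have := Finset.card_univ (α := Fin S.n)
        rw [← hEq, hUcard, Fintype.card_fin] at this
        omega
      have hmlt : m < S.n - 1 := by omega
      obtain ⟨hewlt, hewr⟩ := hew_mem m hmlt
      have hex := exists_exit (rel := S.winRel B g (ew m)) (r := r)
        (by rw [← hewr]; exact hroot (ew m) hewlt) U (Finset.mem_insert_self _ _) hUne
      obtain ⟨u, hu, v, hv, hrel⟩ := hex
      rw [winRel] at hrel
      obtain ⟨t, ht1, ht2, hgt⟩ := hrel
      refine ⟨fun l => if l = m then t else tf l, fun l => if l = m then v else vf l,
        fun l => if l = m then u else uf l, ?_⟩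
      intro l hl
      dsimp only
      rcases Nat.lt_or_ge l m with hlm | hlm
      · have hne : l ≠ m := by omega
        obtain ⟨h1, h2, h3, h4⟩ := hprops l hlm
        rw [if_neg hne, if_neg hne, if_neg hne]
        refine ⟨h1, h2, ?_, ?_⟩
        · rcases h3 with h | ⟨l', hl', hv'⟩
          · exact Or.inl h
          · refine Or.inr ⟨l', hl', ?_⟩
            rw [if_neg (show l' ≠ m by omega)]
            exact hv'
        · refine ⟨h4.1, ?_⟩
          intro l' hl'
          rw [if_neg (show l' ≠ m by omega)]
          exact h4.2 l' hl'
      · have hleq : l = m := by omega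
        subst hleq
        rw [if_pos rfl, if_pos rfl, if_pos rfl]
        refine ⟨⟨ht1, ht2⟩, hgt, ?_, ?_⟩
        · rcases Finset.mem_insert.1 hu with h | h
          · exact Or.inl h
          · obtain ⟨l', hl', hv'⟩ := Finset.mem_image.1 h
            refine Or.inr ⟨l', Finset.mem_range.1 hl', ?_⟩
            rw [if_neg (show l' ≠ l by have := Finset.mem_range.1 hl'; omega)]
            exact hv'
        · refine ⟨fun hvr => hv (hvr ▸ Finset.mem_insert_self _ _), ?_⟩
          intro l' hl' hvv
          rw [if_neg (show l' ≠ l by omega)] at hvv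
          exact hv (hvv ▸ Finset.mem_insert_of_mem
            (Finset.mem_image_of_mem vf (Finset.mem_range.2 hl')))
  obtain ⟨tf, vf, uf, hprops⟩ := build (S.n - 1) le_rfl
  have htlt : ∀ l, l < S.n - 1 → tf l < S.blkT B := by
    intro l hl
    have h1 := (hprops l hl).1.2
    have h2 := (hew_mem l hl).1
    have : (ew l + 1) * B ≤ S.nW * B := Nat.mul_le_mul_right B (by omega)
    rw [S.blkT_eq]
    omega
  have hcov : ∀ i : Fin S.n, i = r ∨ ∃ l, l < S.n - 1 ∧ vf l = i := by
    have hcu : insert r ((Finset.range (S.n - 1)).image vf) = Finset.univ := by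
      apply Finset.eq_univ_of_card
      rw [S.infected_card r vf (S.n - 1) (fun l hl => (hprops l hl).2.2.2),
        Fintype.card_fin]
      omega
    intro i
    have : i ∈ insert r ((Finset.range (S.n - 1)).image vf) := by rw [hcu]; exact Finset.mem_univ i
    rcases Finset.mem_insert.1 this with h | h
    · exact Or.inl h
    · obtain ⟨l, hl, hv⟩ := Finset.mem_image.1 h
      exact Or.inr ⟨l, Finset.mem_range.1 hl, hv⟩
  refine ⟨(Finset.range (S.n - 1)).image (fun l => (tf l, vf l)),
    le_trans Finset.card_image_le (by rw [Finset.card_range]), ?_, ?_⟩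
  · intro p hp
    obtain ⟨l, hl, hv⟩ := Finset.mem_image.1 hp
    rw [← hv]
    exact htlt l (Finset.mem_range.1 hl)
  intro ℓ ω x0 hblk hχF
  set T := S.blkT B with hT
  set sstart := ℓ * T with hs
  -- translate plan facts to facts about ω
  have harc : ∀ l, l < S.n - 1 → S.E (sstart + tf l) ω (uf l) (vf l) = true := by
    intro l hl
    have hlt := htlt l hl
    have := (hprops l hl).2.1
    rw [gext, dif_pos hlt] at this
    rw [← hblk] at this
    exact this
  have hχc : ∀ l, l < S.n - 1 → S.χ (sstart + tf l) (vf l) ω = true := by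
    intro l hl
    exact hχF (tf l, vf l) (Finset.mem_image_of_mem _ (Finset.mem_range.2 hl))
  have hmono : ∀ l l', l < l' → l' < S.n - 1 → tf l < tf l' := by
    intro l l' hll hl'
    have h1 := (hprops l (by omega)).1.2
    have h2 := (hprops l' hl').1.1
    have h3 := hew_mono l l' hll hl'
    have : (ew l + 1) * B ≤ ew l' * B := Nat.mul_le_mul_right B (by omega)
    omega
  have hsend : ∀ l, l < S.n - 1 → uf l = r ∨ ∃ l', l' < l ∧ vf l' = uf l :=
    fun l hl => (hprops l hl).2.2.1
  set Mx := S.maxF (S.state x0 sstart ω) with hMx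
  set mn := S.minF (S.state x0 sstart ω) with hmn
  have hcnn : (0:ℝ) ≤ (Mx - mn) / 2 := by
    have := S.minF_le_maxF (S.state x0 sstart ω)
    linarith
  have hstep : (ℓ + 1) * T = sstart + T := by rw [hs]; ring
  have hηT : (0:ℝ) < S.η ^ T := pow_pos S.hη T
  have hsp : S.spread (S.state x0 sstart ω) = Mx - mn := S.spread_eq _
  rcases le_total (S.state x0 sstart ω r) ((Mx + mn) / 2) with hbr | hbr
  · -- root is low: maximum decreases
    have hcore := S.core_contract x0 ω sstart T r hcnn (S.n - 1) tf vf uf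
      (by rw [← hMx]; linarith) htlt hmono harc hχc hsend hcov
    rw [hstep, S.spread_eq]
    have h1 : S.maxF (S.state x0 (sstart + T) ω) ≤ Mx - S.η ^ T * ((Mx - mn) / 2) :=
      S.maxF_le _ (by intro i; have := hcore i; rw [← hMx] at this; exact this)
    have h2 : mn ≤ S.minF (S.state x0 (sstart + T) ω) :=
      S.minF_state_mono x0 ω (Nat.le_add_right _ _)
    rw [hsp]
    nlinarith [hηT]
  · -- root is high: minimum increases; apply the argument to `-x0`
    have hrneg : S.state (-x0) sstart ω r ≤ S.maxF (S.state (-x0) sstart ω) - (Mx - mn) / 2 := by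
      rw [S.state_neg, S.maxF_neg, Pi.neg_apply, ← hmn]
      linarith
    have hcore := S.core_contract (-x0) ω sstart T r hcnn (S.n - 1) tf vf uf
      hrneg htlt hmono harc hχc hsend hcov
    rw [hstep, S.spread_eq]
    have h1 : ∀ i, mn + S.η ^ T * ((Mx - mn) / 2) ≤ S.state x0 (sstart + T) ω i := by
      intro i
      have := hcore i
      rw [S.state_neg, S.state_neg, S.maxF_neg, Pi.neg_apply, ← hmn] at this
      linarith
    have h1' : mn + S.η ^ T * ((Mx - mn) / 2) ≤ S.minF (S.state x0 (sstart + T) ω) :=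
      S.le_minF _ h1
    have h2 : S.maxF (S.state x0 (sstart + T) ω) ≤ Mx :=
      S.maxF_state_mono x0 ω (Nat.le_add_right _ _)
    rw [hsp]
    nlinarith [hηT]

end RandConsensus
namespace RandConsensus

variable {Ω : Type*} [MeasurableSpace Ω] (S : RandConsensus Ω)

open Classical in
/-- The chosen plan for an epoch realization. -/
noncomputable def plan (B : ℕ) (g : S.Blk B) : Finset (ℕ × Fin S.n) :=
  if h : 1 ≤ B ∧ S.goodBlk B g then (S.exists_plan B h.1 g h.2).choose else ∅

lemma plan_times {B : ℕ} (g : S.Blk B) : ∀ p ∈ S.plan B g, p.1 < S.blkT B := by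
  classical
  unfold plan
  split
  · next h => exact (S.exists_plan B h.1 g h.2).choose_spec.2.1
  · simp

lemma plan_card {B : ℕ} (hB : 1 ≤ B) {g : S.Blk B} (hg : S.goodBlk B g) :
    (S.plan B g).card ≤ S.n - 1 := by
  unfold plan
  rw [dif_pos ⟨hB, hg⟩]
  exact (S.exists_plan B hB g hg).choose_spec.1

lemma plan_contract {B : ℕ} (hB : 1 ≤ B) {g : S.Blk B} (hg : S.goodBlk B g)
    (ℓ : ℕ) (ω : Ω) (x0 : Fin S.n → ℝ) (hblk : S.blkOf B ℓ ω = g)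
    (hχs : ∀ p ∈ S.plan B g, S.χ (ℓ * S.blkT B + p.1) p.2 ω = true) :
    S.spread (S.state x0 ((ℓ + 1) * S.blkT B) ω) ≤
      (1 - S.η ^ S.blkT B / 2) * S.spread (S.state x0 (ℓ * S.blkT B) ω) := by
  have := (S.exists_plan B hB g hg).choose_spec.2.2 ℓ ω x0 hblk
  unfold plan at hχs
  rw [dif_pos ⟨hB, hg⟩] at hχs
  exact this hχs

/-- The graph-and-weights process as a single random variable. -/
def Eamap : Ω → ((ℕ → Fin S.n → Fin S.n → Bool) × (ℕ → Fin S.n → Fin S.n → ℝ)) :=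
  fun ω => ((fun k u v => S.E k ω u v), (fun k i j => S.a k i j ω))

/-- The family of update decisions as a single random variable. -/
def χfam : Ω → (ℕ × Fin S.n → Bool) := fun ω p => S.χ p.1 p.2 ω

/-- The tuple of update decisions with indices in `J`. -/
def bt (J : Finset (ℕ × Fin S.n)) : Ω → (J → Bool) := fun ω p => S.χ p.1.1 p.1.2 ω

/-- The indices of the update decisions belonging to epoch `ℓ`. -/
def Jset (B ℓ : ℕ) : Finset (ℕ × Fin S.n) :=
  ((Finset.range (S.blkT B)) ×ˢ (Finset.univ : Finset (Fin S.n))).image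
    (fun p => (ℓ * S.blkT B + p.1, p.2))

lemma mem_Jset {B ℓ : ℕ} {k : ℕ} {i : Fin S.n} :
    (k, i) ∈ S.Jset B ℓ ↔ ∃ t, t < S.blkT B ∧ k = ℓ * S.blkT B + t := by
  unfold Jset
  simp only [Finset.mem_image, Finset.mem_product, Finset.mem_range, Finset.mem_univ]
  constructor
  · rintro ⟨⟨t, j⟩, ⟨ht, -⟩, heq⟩
    exact ⟨t, ht, by simpa using (congrArg Prod.fst heq).symm⟩
  · rintro ⟨t, ht, rfl⟩
    exact ⟨(t, i), ⟨ht, trivial⟩, rfl⟩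

lemma Jset_disjoint {B : ℕ} (hT : 1 ≤ S.blkT B) {ℓ ℓ' : ℕ} (h : ℓ ≠ ℓ') :
    Disjoint (S.Jset B ℓ) (S.Jset B ℓ') := by
  rw [Finset.disjoint_left]
  rintro ⟨k, i⟩ hk hk'
  rw [S.mem_Jset] at hk hk'
  obtain ⟨t, ht, rfl⟩ := hk
  obtain ⟨t', ht', heq⟩ := hk'
  rcases Nat.lt_or_ge ℓ ℓ' with hll | hll
  · have : (ℓ + 1) * S.blkT B ≤ ℓ' * S.blkT B := Nat.mul_le_mul_right _ (by omega)
    have h2 : (ℓ + 1) * S.blkT B = ℓ * S.blkT B + S.blkT B := by ring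
    omega
  · have hll2 : ℓ' < ℓ := by omega
    have : (ℓ' + 1) * S.blkT B ≤ ℓ * S.blkT B := Nat.mul_le_mul_right _ (by omega)
    have h2 : (ℓ' + 1) * S.blkT B = ℓ' * S.blkT B + S.blkT B := by ring
    omega

/-- The event that epoch `ℓ` has all windows quasi-strongly connected. -/
def Gev (B ℓ : ℕ) : Set Ω := {ω | S.goodBlk B (S.blkOf B ℓ ω)}

/-- The event that all planned updates in epoch `ℓ` succeed (given realization `g`). -/
def Dev (B ℓ : ℕ) (g : S.Blk B) : Set Ω :=
  ⋂ p ∈ S.plan B g, {ω | S.χ (ℓ * S.blkT B + p.1) p.2 ω = true}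

/-- The contraction event for epoch `ℓ`. -/
def Cev (B ℓ : ℕ) : Set Ω :=
  ⋃ (g : S.Blk B) (_ : S.goodBlk B g), ({ω | S.blkOf B ℓ ω = g} ∩ S.Dev B ℓ g)

/-- The event that the planned updates of epoch `ℓ` (for the realized block) fail. -/
def Kev (B ℓ : ℕ) : Set Ω :=
  ⋃ (g : S.Blk B), ({ω | S.blkOf B ℓ ω = g} ∩ (S.Dev B ℓ g)ᶜ)

lemma meas_chi_event (k : ℕ) (i : Fin S.n) (b : Bool) :
    MeasurableSet {ω | S.χ k i ω = b} := S.hχ k i (measurableSet_singleton b)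

lemma meas_blkeq (B ℓ : ℕ) (g : S.Blk B) : MeasurableSet {ω | S.blkOf B ℓ ω = g} := by
  have h : {ω | S.blkOf B ℓ ω = g} = ⋂ (t : Fin (S.blkT B)) (u : Fin S.n) (v : Fin S.n),
      {ω | S.E (ℓ * S.blkT B + t) ω u v = g t u v} := by
    ext ω
    simp only [Set.mem_iInter, Set.mem_setOf_eq, blkOf, funext_iff]
  rw [h]
  exact MeasurableSet.iInter fun t => MeasurableSet.iInter fun u => MeasurableSet.iInter
    fun v => S.hE _ u v (measurableSet_singleton _)

lemma meas_Dev (B ℓ : ℕ) (g : S.Blk B) : MeasurableSet (S.Dev B ℓ g) :=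
  MeasurableSet.biInter (Finset.countable_toSet _)
    fun p _ => S.meas_chi_event _ p.2 true

lemma meas_Gev (B ℓ : ℕ) : MeasurableSet (S.Gev B ℓ) := by
  have h : S.Gev B ℓ = ⋃ (g : S.Blk B) (_ : S.goodBlk B g), {ω | S.blkOf B ℓ ω = g} := by
    ext ω
    simp only [Gev, Set.mem_setOf_eq, Set.mem_iUnion]
    constructor
    · intro h2; exact ⟨_, h2, rfl⟩
    · rintro ⟨g, hg, he⟩; exact he ▸ hg
  rw [h]
  exact MeasurableSet.iUnion fun g => MeasurableSet.iUnion fun _ => S.meas_blkeq B ℓ g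

lemma meas_Cev (B ℓ : ℕ) : MeasurableSet (S.Cev B ℓ) :=
  MeasurableSet.iUnion fun g => MeasurableSet.iUnion fun _ =>
    (S.meas_blkeq B ℓ g).inter (S.meas_Dev B ℓ g)

lemma meas_Kev (B ℓ : ℕ) : MeasurableSet (S.Kev B ℓ) :=
  MeasurableSet.iUnion fun g => (S.meas_blkeq B ℓ g).inter (S.meas_Dev B ℓ g).compl

lemma measurable_Eamap : Measurable S.Eamap := by
  apply Measurable.prod
  · exact measurable_pi_lambda _ fun k => measurable_pi_lambda _ fun u =>
      measurable_pi_lambda _ fun v => S.hE k u v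
  · exact measurable_pi_lambda _ fun k => measurable_pi_lambda _ fun i =>
      measurable_pi_lambda _ fun j => S.ha k i j
lemma measurable_χfam : Measurable S.χfam :=
  measurable_pi_lambda _ fun p => S.hχ p.1 p.2

lemma measurable_bt (J : Finset (ℕ × Fin S.n)) : Measurable (S.bt J) :=
  measurable_pi_lambda _ fun p => S.hχ p.1.1 p.1.2

/-- comap-measurability of a single `χ` event w.r.t. a block tuple. -/
lemma comap_bt_chi_event {J : Finset (ℕ × Fin S.n)} {k : ℕ} {i : Fin S.n}
    (hp : (k, i) ∈ J) (b : Bool) :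
    MeasurableSet[MeasurableSpace.comap (S.bt J) inferInstance] {ω | S.χ k i ω = b} := by
  refine ⟨{f | f ⟨(k, i), hp⟩ = b}, ?_, rfl⟩
  have hm : Measurable (fun f : J → Bool => f ⟨(k, i), hp⟩) := measurable_pi_apply _
  exact hm (measurableSet_singleton b)

lemma comap_bt_mono {J K : Finset (ℕ × Fin S.n)} (hJK : J ⊆ K) :
    MeasurableSpace.comap (S.bt J) inferInstance ≤
      MeasurableSpace.comap (S.bt K) inferInstance := by
  have h : S.bt J = (fun (f : K → Bool) (p : J) => f ⟨p.1, hJK p.2⟩) ∘ S.bt K := rfl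
  rw [h, ← MeasurableSpace.comap_comp]
  exact MeasurableSpace.comap_mono
    ((measurable_pi_lambda _ fun p => measurable_pi_apply _).comap_le)

lemma comap_bt_le_χfam (J : Finset (ℕ × Fin S.n)) :
    MeasurableSpace.comap (S.bt J) inferInstance ≤
      MeasurableSpace.comap S.χfam inferInstance := by
  have h : S.bt J = (fun (f : ℕ × Fin S.n → Bool) (p : J) => f p.1) ∘ S.χfam := rfl
  rw [h, ← MeasurableSpace.comap_comp]
  exact MeasurableSpace.comap_mono
    ((measurable_pi_lambda _ fun p => measurable_pi_apply _).comap_le)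

/-- comap-measurability of block-realization events w.r.t. the graph-weights variable. -/
lemma comap_blkeq (B ℓ : ℕ) (g : S.Blk B) :
    MeasurableSet[MeasurableSpace.comap S.Eamap inferInstance] {ω | S.blkOf B ℓ ω = g} := by
  refine ⟨⋂ (t : Fin (S.blkT B)) (u : Fin S.n) (v : Fin S.n),
    {x : (ℕ → Fin S.n → Fin S.n → Bool) × (ℕ → Fin S.n → Fin S.n → ℝ) |
      x.1 (ℓ * S.blkT B + t) u v = g t u v}, ?_, ?_⟩
  · refine MeasurableSet.iInter fun t => MeasurableSet.iInter fun u =>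
      MeasurableSet.iInter fun v => ?_
    have hm : Measurable fun (x : (ℕ → Fin S.n → Fin S.n → Bool) ×
        (ℕ → Fin S.n → Fin S.n → ℝ)) => x.1 (ℓ * S.blkT B + t) u v := by
      exact ((measurable_pi_apply v).comp ((measurable_pi_apply u).comp
        ((measurable_pi_apply _).comp measurable_fst)))
    exact hm (measurableSet_singleton _)
  · ext ω
    simp only [Set.mem_preimage, Set.mem_iInter, Set.mem_setOf_eq, Eamap, blkOf, funext_iff]

lemma comap_Gev (B ℓ : ℕ) :
    MeasurableSet[MeasurableSpace.comap S.Eamap inferInstance] (S.Gev B ℓ) := by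
  have h : S.Gev B ℓ = ⋃ (g : S.Blk B) (_ : S.goodBlk B g), {ω | S.blkOf B ℓ ω = g} := by
    ext ω
    simp only [Gev, Set.mem_setOf_eq, Set.mem_iUnion]
    constructor
    · intro h2; exact ⟨_, h2, rfl⟩
    · rintro ⟨g, hg, he⟩; exact he ▸ hg
  rw [h]
  exact MeasurableSet.iUnion fun g => MeasurableSet.iUnion fun _ => S.comap_blkeq B ℓ g

lemma comap_bt_Dev_compl (B ℓ : ℕ) (g : S.Blk B) :
    MeasurableSet[MeasurableSpace.comap (S.bt (S.Jset B ℓ)) inferInstance]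
      ((S.Dev B ℓ g)ᶜ) := by
  apply MeasurableSet.compl
  apply MeasurableSet.biInter (Finset.countable_toSet _)
  intro p hp
  refine S.comap_bt_chi_event ?_ true
  rw [S.mem_Jset]
  exact ⟨p.1, S.plan_times g p hp, rfl⟩

end RandConsensus
namespace RandConsensus

variable {Ω : Type*} [MeasurableSpace Ω] (S : RandConsensus Ω)

lemma P_antitone (hmono : ∀ k, S.P (k + 1) ≤ S.P k) : Antitone S.P :=
  antitone_nat_of_succ_le hmono

/-- The decisions in block `J` are independent of the graph-weights process joined with
the decisions in a disjoint block `U`. -/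
lemma indep_block_join (J U : Finset (ℕ × Fin S.n)) (hJU : Disjoint J U) :
    Indep (MeasurableSpace.comap (S.bt J) inferInstance)
      ((MeasurableSpace.comap S.Eamap inferInstance) ⊔
        (MeasurableSpace.comap (S.bt U) inferInstance)) S.μ := by
  haveI := S.hμ
  have hm1le : MeasurableSpace.comap (S.bt J) inferInstance ≤ ‹MeasurableSpace Ω› :=
    (S.measurable_bt J).comap_le
  have hmEle : MeasurableSpace.comap S.Eamap inferInstance ≤ ‹MeasurableSpace Ω› :=
    S.measurable_Eamap.comap_le
  have hmUle : MeasurableSpace.comap (S.bt U) inferInstance ≤ ‹MeasurableSpace Ω› :=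
    (S.measurable_bt U).comap_le
  have hEχ : ∀ t u : Set Ω, MeasurableSet[MeasurableSpace.comap S.χfam inferInstance] t →
      MeasurableSet[MeasurableSpace.comap S.Eamap inferInstance] u →
      S.μ (t ∩ u) = S.μ t * S.μ u := by
    have h := (IndepFun_iff_Indep _ _ _).1 S.hχext
    exact fun t u ht hu => (Indep_iff _ _ _).1 h t u ht hu
  have hblocks : ∀ t u : Set Ω, MeasurableSet[MeasurableSpace.comap (S.bt J) inferInstance] t →
      MeasurableSet[MeasurableSpace.comap (S.bt U) inferInstance] u →
      S.μ (t ∩ u) = S.μ t * S.μ u := by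
    have h : IndepFun (S.bt J) (S.bt U) S.μ :=
      S.hχindep.indepFun_finset J U hJU (fun p => S.hχ p.1 p.2)
    have h2 := (IndepFun_iff_Indep _ _ _).1 h
    exact fun t u ht hu => (Indep_iff _ _ _).1 h2 t u ht hu
  refine IndepSets.indep hm1le (sup_le hmEle hmUle)
    (@MeasurableSpace.isPiSystem_measurableSet Ω (MeasurableSpace.comap (S.bt J) inferInstance))
    (p2 := {s : Set Ω | ∃ a b : Set Ω, MeasurableSet[MeasurableSpace.comap S.Eamap inferInstance] a ∧
      MeasurableSet[MeasurableSpace.comap (S.bt U) inferInstance] b ∧ s = a ∩ b}) ?_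
    (@MeasurableSpace.generateFrom_measurableSet Ω
      (MeasurableSpace.comap (S.bt J) inferInstance)).symm ?_ ?_
  · -- π-system
    rintro s ⟨a, b, ha, hb, rfl⟩ s' ⟨a', b', ha', hb', rfl⟩ -
    refine ⟨a ∩ a', b ∩ b', ha.inter ha', hb.inter hb', ?_⟩
    ext ω; simp only [Set.mem_inter_iff]; tauto
  · -- generateFrom p2 = mE ⊔ mU
    apply le_antisymm
    · refine sup_le ?_ ?_
      · intro s hs
        exact MeasurableSpace.measurableSet_generateFrom
          ⟨s, Set.univ, hs, MeasurableSet.univ, (Set.inter_univ s).symm⟩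
      · intro s hs
        exact MeasurableSpace.measurableSet_generateFrom
          ⟨Set.univ, s, MeasurableSet.univ, hs, (Set.univ_inter s).symm⟩
    · apply MeasurableSpace.generateFrom_le
      rintro s ⟨a, b, ha, hb, rfl⟩
      exact MeasurableSet.inter (le_sup_left (α := MeasurableSpace Ω) a ha)
        (le_sup_right (α := MeasurableSpace Ω) b hb)
  · rw [IndepSets_iff]
    rintro t1 t2 ht1 ⟨a, b, ha, hb, rfl⟩
    have ht1χ : MeasurableSet[MeasurableSpace.comap S.χfam inferInstance] t1 :=
      S.comap_bt_le_χfam J t1 ht1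
    have hbχ : MeasurableSet[MeasurableSpace.comap S.χfam inferInstance] b :=
      S.comap_bt_le_χfam U b hb
    have hrw : t1 ∩ (a ∩ b) = (t1 ∩ b) ∩ a := by
      ext ω; simp only [Set.mem_inter_iff]; tauto
    rw [hrw, hEχ _ _ (ht1χ.inter hbχ) ha, hblocks _ _ ht1 hb,
      Set.inter_comm a b, hEχ _ _ hbχ ha]
    ring

lemma Dev_measure (B ℓ : ℕ) (g : S.Blk B) :
    S.μ (S.Dev B ℓ g) = ∏ p ∈ S.plan B g, ENNReal.ofReal (S.P (ℓ * S.blkT B + p.1)) := by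
  classical
  set ι : ℕ × Fin S.n → ℕ × Fin S.n := fun p => (ℓ * S.blkT B + p.1, p.2) with hι
  have hinj : ∀ x ∈ S.plan B g, ∀ y ∈ S.plan B g, ι x = ι y → x = y := by
    rintro ⟨x1, x2⟩ - ⟨y1, y2⟩ - h
    have h1 := congrArg Prod.fst h
    have h2 := congrArg Prod.snd h
    simp only [ι] at h1 h2
    have : x1 = y1 := by omega
    simp [this, h2]
  have hDev : S.Dev B ℓ g = ⋂ q ∈ (S.plan B g).image ι, {ω | S.χ q.1 q.2 ω = true} := by
    ext ω
    simp only [Dev, Set.mem_iInter, Finset.mem_image, Set.mem_setOf_eq]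
    constructor
    · rintro h q ⟨p, hp, rfl⟩
      exact h p hp
    · intro h p hp
      exact h (ι p) ⟨p, hp, rfl⟩
  have hmeas : ∀ q ∈ (S.plan B g).image ι,
      MeasurableSet[MeasurableSpace.comap (fun ω => S.χ q.1 q.2 ω) inferInstance]
        {ω | S.χ q.1 q.2 ω = true} :=
    fun q _ => ⟨{true}, trivial, rfl⟩
  rw [hDev, S.hχindep.meas_biInter hmeas, Finset.prod_image hinj]
  exact Finset.prod_congr rfl fun p _ => S.hχP _ p.2

lemma blkT_pos (B : ℕ) (hB : 1 ≤ B) : 0 < S.blkT B := by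
  have := S.hn
  have h1 : 0 < S.n * (S.n - 1) := Nat.mul_pos (by omega) (by omega)
  exact Nat.mul_pos h1 hB

lemma Dev_lower (B : ℕ) (hB : 1 ≤ B) (hmono : ∀ k, S.P (k + 1) ≤ S.P k)
    {g : S.Blk B} (hg : S.goodBlk B g) (ℓ : ℕ) :
    ENNReal.ofReal (S.P ((ℓ + 1) * S.blkT B) ^ (S.n - 1)) ≤ S.μ (S.Dev B ℓ g) := by
  rw [S.Dev_measure]
  set y := ENNReal.ofReal (S.P ((ℓ + 1) * S.blkT B)) with hy
  have hy1 : y ≤ 1 := ENNReal.ofReal_le_one.2 (le_of_lt (S.hP1 _))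
  have heach : ∀ p ∈ S.plan B g, y ≤ ENNReal.ofReal (S.P (ℓ * S.blkT B + p.1)) := by
    intro p hp
    apply ENNReal.ofReal_le_ofReal
    apply S.P_antitone hmono
    have h1 := S.plan_times g p hp
    have h2 : (ℓ + 1) * S.blkT B = ℓ * S.blkT B + S.blkT B := by ring
    omega
  calc ENNReal.ofReal (S.P ((ℓ + 1) * S.blkT B) ^ (S.n - 1))
      = y ^ (S.n - 1) := by rw [hy, ENNReal.ofReal_pow (S.hP0 _)]
    _ ≤ y ^ (S.plan B g).card := by
        have hcard := S.plan_card hB hg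
        have : y ^ (S.n - 1) = y ^ (S.plan B g).card * y ^ (S.n - 1 - (S.plan B g).card) := by
          rw [← pow_add]
          congr 1
          omega
        rw [this]
        calc y ^ (S.plan B g).card * y ^ (S.n - 1 - (S.plan B g).card)
            ≤ y ^ (S.plan B g).card * 1 := by
              exact mul_le_mul_right (pow_le_one' hy1 _) _
          _ = y ^ (S.plan B g).card := mul_one _
    _ = ∏ _p ∈ S.plan B g, y := by rw [Finset.prod_const]
    _ ≤ ∏ p ∈ S.plan B g, ENNReal.ofReal (S.P (ℓ * S.blkT B + p.1)) :=
        Finset.prod_le_prod' heach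

end RandConsensus
namespace RandConsensus

variable {Ω : Type*} [MeasurableSpace Ω] (S : RandConsensus Ω)

/-- The window QSC event. -/
def Aset (B m : ℕ) : Set Ω :=
  {ω | IsQSC (S.jointRel ω (Set.Icc (m * B) ((m + 1) * B - 1)))}

lemma nW_pos : 0 < S.nW := by
  have := S.hn
  exact Nat.mul_pos (by omega) (by omega)

lemma winRel_eq (B : ℕ) (hB : 1 ≤ B) (ℓ w : ℕ) (hw : w < S.nW) (ω : Ω) :
    S.winRel B (S.blkOf B ℓ ω) w =
      S.jointRel ω (Set.Icc ((ℓ * S.nW + w) * B) ((ℓ * S.nW + w + 1) * B - 1)) := by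
  have e1 : ℓ * S.blkT B = ℓ * S.nW * B := by rw [S.blkT_eq]; ring
  have e2 : (ℓ * S.nW + w) * B = ℓ * S.nW * B + w * B := by ring
  have e3 : (ℓ * S.nW + w + 1) * B = ℓ * S.nW * B + w * B + B := by ring
  have e4 : (w + 1) * B = w * B + B := by ring
  have e5 : S.blkT B = S.nW * B := S.blkT_eq B
  have e6 : (w + 1) * B ≤ S.nW * B := Nat.mul_le_mul_right _ (by omega)
  funext u v
  apply propext
  constructor
  · rintro ⟨t, h1, h2, hg⟩
    have ht : t < S.blkT B := by omega
    rw [gext, dif_pos ht] at hg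
    refine ⟨ℓ * S.blkT B + t, ?_, hg⟩
    rw [Set.mem_Icc]
    omega
  · rintro ⟨k, hk, hE⟩
    rw [Set.mem_Icc] at hk
    refine ⟨k - ℓ * S.blkT B, by omega, by omega, ?_⟩
    have ht : k - ℓ * S.blkT B < S.blkT B := by omega
    rw [gext, dif_pos ht]
    show S.E (ℓ * S.blkT B + (k - ℓ * S.blkT B)) ω u v = true
    have : ℓ * S.blkT B + (k - ℓ * S.blkT B) = k := by omega
    rw [this]
    exact hE

lemma Gev_eq (B : ℕ) (hB : 1 ≤ B) (ℓ : ℕ) :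
    S.Gev B ℓ = ⋂ w ∈ Finset.range S.nW, S.Aset B (ℓ * S.nW + w) := by
  ext ω
  simp only [Gev, goodBlk, Set.mem_setOf_eq, Set.mem_iInter, Finset.mem_range, Aset]
  constructor
  · intro h w hw
    rw [← S.winRel_eq B hB ℓ w hw ω]
    exact h w hw
  · intro h w hw
    rw [S.winRel_eq B hB ℓ w hw ω]
    exact h w hw

lemma meas_Aset (B : ℕ) (hB : 1 ≤ B) (m : ℕ) : MeasurableSet (S.Aset B m) := by
  classical
  have hrel : ∀ ω, S.jointRel ω (Set.Icc (m * B) ((m + 1) * B - 1)) =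
      fun u v => ∃ t : Fin B, S.E (m * B + t) ω u v = true := by
    intro ω
    funext u v
    apply propext
    have e : (m + 1) * B = m * B + B := by ring
    constructor
    · rintro ⟨k, hk, hE⟩
      rw [Set.mem_Icc] at hk
      refine ⟨⟨k - m * B, by omega⟩, ?_⟩
      show S.E (m * B + (k - m * B)) ω u v = true
      have : m * B + (k - m * B) = k := by omega
      rw [this]; exact hE
    · rintro ⟨t, hE⟩
      exact ⟨m * B + t, by rw [Set.mem_Icc]; have := t.2; omega, hE⟩
  have h : S.Aset B m = ⋃ (h : Fin B → Fin S.n → Fin S.n → Bool)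
      (_ : IsQSC (fun u v => ∃ t : Fin B, h t u v = true)),
      {ω | ∀ (t : Fin B) (u v : Fin S.n), S.E (m * B + t) ω u v = h t u v} := by
    ext ω
    simp only [Aset, Set.mem_setOf_eq, Set.mem_iUnion]
    constructor
    · intro hq
      refine ⟨fun t u v => S.E (m * B + t) ω u v, ?_, fun _ _ _ => rfl⟩
      rw [hrel ω] at hq
      exact hq
    · rintro ⟨h, hq, hmatch⟩
      rw [hrel ω]
      have : (fun u v => ∃ t : Fin B, S.E (m * B + ↑t) ω u v = true) =
          (fun u v => ∃ t : Fin B, h t u v = true) := by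
        funext u v
        apply propext
        constructor
        · rintro ⟨t, ht⟩; exact ⟨t, by rw [← hmatch t u v]; exact ht⟩
        · rintro ⟨t, ht⟩; exact ⟨t, by rw [hmatch t u v]; exact ht⟩
      rw [this]
      exact hq
  rw [h]
  refine MeasurableSet.iUnion fun hfun => MeasurableSet.iUnion fun _ => ?_
  have : {ω | ∀ (t : Fin B) (u v : Fin S.n), S.E (m * B + t) ω u v = hfun t u v} =
      ⋂ (t : Fin B) (u : Fin S.n) (v : Fin S.n), {ω | S.E (m * B + t) ω u v = hfun t u v} := by
    ext ω; simp only [Set.mem_setOf_eq, Set.mem_iInter]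
  rw [this]
  exact MeasurableSet.iInter fun t => MeasurableSet.iInter fun u => MeasurableSet.iInter
    fun v => S.hE _ u v (measurableSet_singleton _)

/-- Lower bound on the probability of a good epoch. -/
lemma Gev_lower (B : ℕ) (hB : 1 ≤ B) {q : ℝ} (hq0 : 0 ≤ q)
    (hindep : iIndepSet (fun m : ℕ => S.Aset B m) S.μ)
    (hconn : ∀ m : ℕ, ENNReal.ofReal q ≤ S.μ (S.Aset B m)) (ℓ : ℕ) :
    ENNReal.ofReal (q ^ S.nW) ≤ S.μ (S.Gev B ℓ) := by
  classical
  rw [S.Gev_eq B hB ℓ]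
  have hre : (⋂ w ∈ Finset.range S.nW, S.Aset B (ℓ * S.nW + w)) =
      ⋂ i ∈ (Finset.range S.nW).image (fun w => ℓ * S.nW + w), S.Aset B i := by
    ext ω
    simp only [Set.mem_iInter, Finset.mem_image, Finset.mem_range]
    constructor
    · rintro h i ⟨w, hw, rfl⟩; exact h w hw
    · intro h w hw; exact h _ ⟨w, hw, rfl⟩
  rw [hre, hindep.meas_biInter]
  have hinj : ∀ x ∈ Finset.range S.nW, ∀ y ∈ Finset.range S.nW,
      ℓ * S.nW + x = ℓ * S.nW + y → x = y := by intro x _ y _ h; omega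
  rw [Finset.prod_image hinj]
  calc ENNReal.ofReal (q ^ S.nW) = ENNReal.ofReal q ^ S.nW := ENNReal.ofReal_pow hq0 _
    _ = ∏ _w ∈ Finset.range S.nW, ENNReal.ofReal q := by
        rw [Finset.prod_const, Finset.card_range]
    _ ≤ ∏ w ∈ Finset.range S.nW, S.μ (S.Aset B (ℓ * S.nW + w)) :=
        Finset.prod_le_prod' fun w _ => hconn _

end RandConsensus
namespace RandConsensus

open MeasurableSpace

variable {Ω : Type*} [MeasurableSpace Ω] (S : RandConsensus Ω)

lemma ennreal_step {x d y : ENNReal} (hx1 : x ≤ 1) (hd : d ≤ 1) (hyx : y ≤ x) :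
    (1 - x) + x * (1 - d) ≤ 1 - y * d := by
  have hxtop : x ≠ ⊤ := (lt_of_le_of_lt hx1 ENNReal.one_lt_top).ne
  have h1 : x * (1 - d) = x - x * d := by
    rw [ENNReal.mul_sub (fun _ _ => hxtop), mul_one]
  have h2 : x * d ≤ x := by
    calc x * d ≤ x * 1 := mul_le_mul_right hd x
      _ = x := mul_one x
  rw [h1, tsub_add_tsub_cancel hx1 h2]
  exact tsub_le_tsub_left (mul_le_mul_left hyx d) 1

/-- The event describing the exact pattern of good epochs among `I`. -/
def GEpat (B : ℕ) (I sub : Finset ℕ) : Set Ω :=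
  (⋂ ℓ ∈ sub, S.Gev B ℓ) ∩ (⋂ ℓ ∈ I \ sub, (S.Gev B ℓ)ᶜ)

lemma meas_GEpat (B : ℕ) (I sub : Finset ℕ) : MeasurableSet (S.GEpat B I sub) :=
  (MeasurableSet.biInter (Finset.countable_toSet _) fun ℓ _ => S.meas_Gev B ℓ).inter
    (MeasurableSet.biInter (Finset.countable_toSet _) fun ℓ _ => (S.meas_Gev B ℓ).compl)

lemma comap_GEpat (B : ℕ) (I sub : Finset ℕ) :
    MeasurableSet[MeasurableSpace.comap S.Eamap inferInstance] (S.GEpat B I sub) :=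
  (MeasurableSet.biInter (Finset.countable_toSet _) fun ℓ _ => S.comap_Gev B ℓ).inter
    (MeasurableSet.biInter (Finset.countable_toSet _) fun ℓ _ => (S.comap_Gev B ℓ).compl)

/-- Independence of an epoch's QSC event from the pattern of other epochs. -/
lemma GE_factor (B : ℕ) (hB : 1 ≤ B)
    (hindep : iIndepSet (fun m : ℕ => S.Aset B m) S.μ)
    (I sub : Finset ℕ) (hsub : sub ⊆ I) (m : ℕ) (hm : m ∉ I) :
    S.μ (S.GEpat B I sub ∩ S.Gev B m) = S.μ (S.GEpat B I sub) * S.μ (S.Gev B m) ∧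
      S.μ (S.GEpat B I sub ∩ (S.Gev B m)ᶜ) =
        S.μ (S.GEpat B I sub) * S.μ ((S.Gev B m)ᶜ) := by
  classical
  have h_le : ∀ w : ℕ, MeasurableSpace.generateFrom {S.Aset B w} ≤ ‹MeasurableSpace Ω› := by
    intro w
    apply MeasurableSpace.generateFrom_le
    rintro t ht
    rw [Set.mem_singleton_iff] at ht
    subst ht
    exact S.meas_Aset B hB w
  have hiI : iIndep (fun w => MeasurableSpace.generateFrom {S.Aset B w}) S.μ :=
    (iIndepSet_iff_iIndep _ _).1 hindep
  have hind := indep_biSup_compl h_le hiI {w | m * S.nW ≤ w ∧ w < (m + 1) * S.nW}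
  -- the epoch-m event is measurable w.r.t. its own windows
  have hGm : MeasurableSet[⨆ w ∈ {w : ℕ | m * S.nW ≤ w ∧ w < (m + 1) * S.nW},
      MeasurableSpace.generateFrom {S.Aset B w}] (S.Gev B m) := by
    rw [S.Gev_eq B hB m]
    refine MeasurableSet.biInter (Finset.countable_toSet _) fun w hw => ?_
    have hwlt : w < S.nW := by have h2 : w ∈ Finset.range S.nW := hw; simpa using h2
    have hmem : m * S.nW + w ∈ {w : ℕ | m * S.nW ≤ w ∧ w < (m + 1) * S.nW} := by
      constructor
      · omega
      · have : (m + 1) * S.nW = m * S.nW + S.nW := by ring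
        omega
    have hle := le_biSup (fun w => MeasurableSpace.generateFrom {S.Aset B w}) hmem
    exact hle _ (MeasurableSpace.measurableSet_generateFrom rfl)
  -- the pattern event is measurable w.r.t. the other windows
  have hGE : MeasurableSet[⨆ w ∈ {w : ℕ | m * S.nW ≤ w ∧ w < (m + 1) * S.nW}ᶜ,
      MeasurableSpace.generateFrom {S.Aset B w}] (S.GEpat B I sub) := by
    have hcomp : ∀ ℓ, ℓ ≠ m → MeasurableSet[⨆ w ∈ {w : ℕ | m * S.nW ≤ w ∧
        w < (m + 1) * S.nW}ᶜ, MeasurableSpace.generateFrom {S.Aset B w}] (S.Gev B ℓ) := by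
      intro ℓ hℓ
      rw [S.Gev_eq B hB ℓ]
      refine MeasurableSet.biInter (Finset.countable_toSet _) fun w hw => ?_
      have hwlt : w < S.nW := by have h2 : w ∈ Finset.range S.nW := hw; simpa using h2
      have hmem : ℓ * S.nW + w ∈ {w : ℕ | m * S.nW ≤ w ∧ w < (m + 1) * S.nW}ᶜ := by
        intro hcon
        obtain ⟨hc1, hc2⟩ := hcon
        rcases Nat.lt_or_ge ℓ m with h | h
        · have h1 : (ℓ + 1) * S.nW ≤ m * S.nW := Nat.mul_le_mul_right _ (by omega)
          have h2 : (ℓ + 1) * S.nW = ℓ * S.nW + S.nW := by ring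
          omega
        · have hm2 : m < ℓ := by omega
          have h1 : (m + 1) * S.nW ≤ ℓ * S.nW := Nat.mul_le_mul_right _ (by omega)
          have h2 : (m + 1) * S.nW = m * S.nW + S.nW := by ring
          omega
      have hle := le_biSup (fun w => MeasurableSpace.generateFrom {S.Aset B w}) hmem
      exact hle _ (MeasurableSpace.measurableSet_generateFrom rfl)
    refine MeasurableSet.inter ?_ ?_
    · exact MeasurableSet.biInter (Finset.countable_toSet _) fun ℓ hℓ =>
        hcomp ℓ (by rintro rfl; exact hm (hsub hℓ))
    · refine MeasurableSet.biInter (Finset.countable_toSet _) fun ℓ hℓ => ?_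
      have hℓ' : ℓ ∈ I ∧ ℓ ∉ sub := by have h2 : ℓ ∈ I \ sub := hℓ; simpa using h2
      exact (hcomp ℓ (by rintro rfl; exact hm hℓ'.1)).compl
  have hfac := (Indep_iff _ _ _).1 hind
  constructor
  · rw [Set.inter_comm, hfac _ _ hGm hGE, mul_comm]
  · rw [Set.inter_comm, hfac _ _ hGm.compl hGE, mul_comm]

lemma Kev_inter_blk (B ℓ : ℕ) (g : S.Blk B) :
    S.Kev B ℓ ∩ {ω | S.blkOf B ℓ ω = g} = (S.Dev B ℓ g)ᶜ ∩ {ω | S.blkOf B ℓ ω = g} := by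
  ext ω
  simp only [Kev, Set.mem_inter_iff, Set.mem_iUnion, Set.mem_setOf_eq, Set.mem_compl_iff]
  constructor
  · rintro ⟨⟨g', ⟨hg', hD⟩⟩, hg⟩
    rw [hg] at hg'
    subst hg'
    exact ⟨hD, hg⟩
  · rintro ⟨hD, hg⟩
    exact ⟨⟨g, hg, hD⟩, hg⟩

lemma measure_partition_blk (B ℓ : ℕ) (Y : Set Ω) (hY : MeasurableSet Y) :
    S.μ Y = ∑ g : S.Blk B, S.μ (Y ∩ {ω | S.blkOf B ℓ ω = g}) := by
  classical
  have hcover : Y = ⋃ g ∈ (Finset.univ : Finset (S.Blk B)), (Y ∩ {ω | S.blkOf B ℓ ω = g}) := by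
    ext ω
    simp only [Set.mem_iUnion, Set.mem_inter_iff, Set.mem_setOf_eq]
    exact ⟨fun h => ⟨S.blkOf B ℓ ω, Finset.mem_univ _, h, rfl⟩, fun ⟨g, _, h, _⟩ => h⟩
  have hdisj : ((Finset.univ : Finset (S.Blk B)) : Set (S.Blk B)).PairwiseDisjoint
      (fun g => Y ∩ {ω | S.blkOf B ℓ ω = g}) := by
    intro g1 _ g2 _ hne
    rw [Function.onFun, Set.disjoint_left]
    rintro ω ⟨-, h1⟩ ⟨-, h2⟩
    rw [Set.mem_setOf_eq] at h1 h2
    exact hne (h1 ▸ h2 ▸ rfl)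
  conv_lhs => rw [hcover]
  rw [measure_biUnion_finset hdisj (fun g _ => hY.inter (S.meas_blkeq B ℓ g))]

/-- Peeling off the update-decision failures epoch by epoch. -/
lemma chi_peel (B : ℕ) (hB : 1 ≤ B) (hmono : ∀ k, S.P (k + 1) ≤ S.P k) (s : Finset ℕ) :
    ∀ A : Set Ω, MeasurableSet[MeasurableSpace.comap S.Eamap inferInstance] A →
    S.μ (A ∩ ⋂ ℓ ∈ s, S.Kev B ℓ) ≤
      S.μ A * ∏ ℓ ∈ s, (1 - ENNReal.ofReal (S.P ((ℓ + 1) * S.blkT B) ^ (S.n - 1))) := by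
  classical
  haveI := S.hμ
  induction s using Finset.induction with
  | empty => simp
  | @insert ℓ0 s' hℓ0 ih =>
    intro A hA
    have hAamb : MeasurableSet A := S.measurable_Eamap.comap_le _ hA
    have hT : 0 < S.blkT B := S.blkT_pos B hB
    have hdisj : Disjoint (S.Jset B ℓ0) (s'.biUnion (S.Jset B)) := by
      rw [Finset.disjoint_biUnion_right]
      exact fun ℓ hℓ => S.Jset_disjoint hT (by rintro rfl; exact hℓ0 hℓ)
    have htriple := S.indep_block_join (S.Jset B ℓ0) (s'.biUnion (S.Jset B)) hdisj
    have hfac := (Indep_iff _ _ _).1 htriple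
    -- measurability of the remaining events in the "join" σ-algebra
    have hKm2 : ∀ ℓ ∈ s', MeasurableSet[(MeasurableSpace.comap S.Eamap inferInstance) ⊔
        (MeasurableSpace.comap (S.bt (s'.biUnion (S.Jset B))) inferInstance)] (S.Kev B ℓ) := by
      intro ℓ hℓ
      refine MeasurableSet.iUnion fun g => MeasurableSet.inter ?_ ?_
      · exact (le_sup_left (α := MeasurableSpace Ω)) _ (S.comap_blkeq B ℓ g)
      · refine (le_sup_right (α := MeasurableSpace Ω)) _ ?_
        exact S.comap_bt_mono (Finset.subset_biUnion_of_mem (S.Jset B) hℓ) _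
          (S.comap_bt_Dev_compl B ℓ g)
    have hrest : MeasurableSet[(MeasurableSpace.comap S.Eamap inferInstance) ⊔
        (MeasurableSpace.comap (S.bt (s'.biUnion (S.Jset B))) inferInstance)]
        (⋂ ℓ ∈ s', S.Kev B ℓ) :=
      MeasurableSet.biInter (Finset.countable_toSet _) fun ℓ hℓ => hKm2 ℓ (by exact hℓ)
    have hrest_amb : MeasurableSet (⋂ ℓ ∈ s', S.Kev B ℓ) :=
      MeasurableSet.biInter (Finset.countable_toSet _) fun ℓ _ => S.meas_Kev B ℓ
    set d : ENNReal := ENNReal.ofReal (S.P ((ℓ0 + 1) * S.blkT B) ^ (S.n - 1)) with hd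
    -- expand the new epoch
    rw [Finset.set_biInter_insert]
    have hsplit : S.μ (A ∩ (S.Kev B ℓ0 ∩ ⋂ ℓ ∈ s', S.Kev B ℓ)) =
        ∑ g : S.Blk B, S.μ ((A ∩ (S.Kev B ℓ0 ∩ ⋂ ℓ ∈ s', S.Kev B ℓ)) ∩
          {ω | S.blkOf B ℓ0 ω = g}) :=
      S.measure_partition_blk B ℓ0 _
        (hAamb.inter ((S.meas_Kev B ℓ0).inter hrest_amb))
    have hpiece : ∀ g : S.Blk B,
        S.μ ((A ∩ (S.Kev B ℓ0 ∩ ⋂ ℓ ∈ s', S.Kev B ℓ)) ∩ {ω | S.blkOf B ℓ0 ω = g}) ≤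
          (1 - d) * S.μ ((A ∩ ⋂ ℓ ∈ s', S.Kev B ℓ) ∩ {ω | S.blkOf B ℓ0 ω = g}) := by
      intro g
      have hre : (A ∩ (S.Kev B ℓ0 ∩ ⋂ ℓ ∈ s', S.Kev B ℓ)) ∩ {ω | S.blkOf B ℓ0 ω = g} =
          ((S.Dev B ℓ0 g)ᶜ) ∩ ((A ∩ ⋂ ℓ ∈ s', S.Kev B ℓ) ∩ {ω | S.blkOf B ℓ0 ω = g}) := by
        have h0 := S.Kev_inter_blk B ℓ0 g
        ext ω
        have h0ω : ω ∈ S.Kev B ℓ0 ∩ {ω | S.blkOf B ℓ0 ω = g} ↔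
            ω ∈ (S.Dev B ℓ0 g)ᶜ ∩ {ω | S.blkOf B ℓ0 ω = g} := by rw [h0]
        simp only [Set.mem_inter_iff, Set.mem_compl_iff] at h0ω ⊢
        tauto
      rw [hre]
      have ht2 : MeasurableSet[(MeasurableSpace.comap S.Eamap inferInstance) ⊔
          (MeasurableSpace.comap (S.bt (s'.biUnion (S.Jset B))) inferInstance)]
          ((A ∩ ⋂ ℓ ∈ s', S.Kev B ℓ) ∩ {ω | S.blkOf B ℓ0 ω = g}) := by
        refine MeasurableSet.inter (MeasurableSet.inter ?_ hrest) ?_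
        · exact (le_sup_left (α := MeasurableSpace Ω)) _ hA
        · exact (le_sup_left (α := MeasurableSpace Ω)) _ (S.comap_blkeq B ℓ0 g)
      rw [hfac _ _ (S.comap_bt_Dev_compl B ℓ0 g) ht2]
      apply mul_le_mul_left
      -- bound the failure probability
      rw [prob_compl_eq_one_sub (S.meas_Dev B ℓ0 g)]
      by_cases hg : S.goodBlk B g
      · exact tsub_le_tsub_left (S.Dev_lower B hB hmono hg ℓ0) 1
      · have hplan : S.plan B g = ∅ := by
          unfold plan
          rw [dif_neg (by tauto)]
        have : S.Dev B ℓ0 g = Set.univ := by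
          rw [Dev, hplan]
          simp
        rw [this, measure_univ]
        simp
    calc S.μ (A ∩ (S.Kev B ℓ0 ∩ ⋂ ℓ ∈ s', S.Kev B ℓ))
        = ∑ g : S.Blk B, S.μ ((A ∩ (S.Kev B ℓ0 ∩ ⋂ ℓ ∈ s', S.Kev B ℓ)) ∩
            {ω | S.blkOf B ℓ0 ω = g}) := hsplit
      _ ≤ ∑ g : S.Blk B, (1 - d) * S.μ ((A ∩ ⋂ ℓ ∈ s', S.Kev B ℓ) ∩
            {ω | S.blkOf B ℓ0 ω = g}) := Finset.sum_le_sum fun g _ => hpiece g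
      _ = (1 - d) * ∑ g : S.Blk B, S.μ ((A ∩ ⋂ ℓ ∈ s', S.Kev B ℓ) ∩
            {ω | S.blkOf B ℓ0 ω = g}) := by rw [Finset.mul_sum]
      _ = (1 - d) * S.μ (A ∩ ⋂ ℓ ∈ s', S.Kev B ℓ) := by
            rw [← S.measure_partition_blk B ℓ0 _ (hAamb.inter hrest_amb)]
      _ ≤ (1 - d) * (S.μ A * ∏ ℓ ∈ s', (1 - ENNReal.ofReal
            (S.P ((ℓ + 1) * S.blkT B) ^ (S.n - 1)))) := mul_le_mul_right (ih A hA) _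
      _ = S.μ A * ∏ ℓ ∈ insert ℓ0 s', (1 - ENNReal.ofReal
            (S.P ((ℓ + 1) * S.blkT B) ^ (S.n - 1))) := by
            rw [Finset.prod_insert hℓ0, hd]
            ring

lemma pattern_partition (B : ℕ) (I : Finset ℕ) (X : Set Ω) (hX : MeasurableSet X) :
    S.μ X = ∑ sub ∈ I.powerset, S.μ (X ∩ S.GEpat B I sub) := by
  classical
  have hcover : X = ⋃ sub ∈ I.powerset, (X ∩ S.GEpat B I sub) := by
    ext ω
    simp only [Set.mem_iUnion, Set.mem_inter_iff]
    constructor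
    · intro h
      refine ⟨I.filter (fun ℓ => ω ∈ S.Gev B ℓ), Finset.mem_powerset.2 (Finset.filter_subset _ _),
        h, ?_, ?_⟩
      · exact Set.mem_biInter fun ℓ hℓ => (Finset.mem_filter.1 hℓ).2
      · refine Set.mem_biInter fun ℓ hℓ => ?_
        have hℓ' : ℓ ∈ I ∧ ℓ ∉ I.filter (fun ℓ => ω ∈ S.Gev B ℓ) := by
          simpa using Finset.mem_sdiff.1 hℓ
        rw [Finset.mem_filter] at hℓ'
        exact fun hc => hℓ'.2 ⟨hℓ'.1, hc⟩
    · rintro ⟨sub, -, h, -⟩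
      exact h
  have hdisj : (I.powerset : Set (Finset ℕ)).PairwiseDisjoint
      (fun sub => X ∩ S.GEpat B I sub) := by
    intro s1 hs1 s2 hs2 hne
    rw [Finset.mem_coe, Finset.mem_powerset] at hs1 hs2
    rw [Function.onFun, Set.disjoint_left]
    rintro ω ⟨-, hω1⟩ ⟨-, hω2⟩
    refine hne ?_
    obtain ⟨h1p, h1n⟩ := hω1
    obtain ⟨h2p, h2n⟩ := hω2
    apply Finset.ext
    intro ℓ
    constructor
    · intro hℓ
      by_contra hℓ2
      exact (Set.mem_iInter₂.1 h2n ℓ (Finset.mem_sdiff.2 ⟨hs1 hℓ, hℓ2⟩))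
        (Set.mem_iInter₂.1 h1p ℓ hℓ)
    · intro hℓ
      by_contra hℓ2
      exact (Set.mem_iInter₂.1 h1n ℓ (Finset.mem_sdiff.2 ⟨hs2 hℓ, hℓ2⟩))
        (Set.mem_iInter₂.1 h2p ℓ hℓ)
  conv_lhs => rw [hcover]
  rw [measure_biUnion_finset hdisj (fun sub _ => hX.inter (S.meas_GEpat B I sub))]

end RandConsensus
namespace RandConsensus

variable {Ω : Type*} [MeasurableSpace Ω] (S : RandConsensus Ω)

lemma GE_sum_bound (B : ℕ) (hB : 1 ≤ B) {q : ℝ} (hq0 : 0 ≤ q)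
    (hindep : iIndepSet (fun m : ℕ => S.Aset B m) S.μ)
    (hconn : ∀ m : ℕ, ENNReal.ofReal q ≤ S.μ (S.Aset B m))
    (d : ℕ → ENNReal) (hd : ∀ ℓ, d ℓ ≤ 1) (I : Finset ℕ) :
    ∑ sub ∈ I.powerset, S.μ (S.GEpat B I sub) * ∏ ℓ ∈ sub, (1 - d ℓ)
      ≤ ∏ ℓ ∈ I, (1 - ENNReal.ofReal (q ^ S.nW) * d ℓ) := by
  classical
  haveI := S.hμ
  induction I using Finset.induction with
  | empty =>
    simp only [Finset.powerset_empty, Finset.sum_singleton, Finset.prod_empty, mul_one]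
    have : S.GEpat B ∅ ∅ = Set.univ := by
      simp [GEpat]
    rw [this, measure_univ]
  | @insert m I hm ih =>
    rw [Finset.sum_powerset_insert hm, Finset.prod_insert hm]
    have hstep : ∀ sub ∈ I.powerset,
        S.μ (S.GEpat B (insert m I) sub) * ∏ ℓ ∈ sub, (1 - d ℓ) +
          S.μ (S.GEpat B (insert m I) (insert m sub)) * ∏ ℓ ∈ insert m sub, (1 - d ℓ)
        ≤ (S.μ (S.GEpat B I sub) * ∏ ℓ ∈ sub, (1 - d ℓ)) *
            (1 - ENNReal.ofReal (q ^ S.nW) * d m) := by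
      intro sub hsub
      rw [Finset.mem_powerset] at hsub
      have hmsub : m ∉ sub := fun hc => hm (hsub hc)
      have hGE1 : S.GEpat B (insert m I) sub = S.GEpat B I sub ∩ (S.Gev B m)ᶜ := by
        have hset : insert m I \ sub = insert m (I \ sub) := by
          ext x
          simp only [Finset.mem_sdiff, Finset.mem_insert]
          constructor
          · rintro ⟨h1 | h1, h2⟩
            · exact Or.inl h1
            · exact Or.inr ⟨h1, h2⟩
          · rintro (rfl | ⟨h1, h2⟩)
            · exact ⟨Or.inl rfl, hmsub⟩
            · exact ⟨Or.inr h1, h2⟩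
        rw [GEpat, GEpat, hset, Finset.set_biInter_insert]
        ext ω
        simp only [Set.mem_inter_iff, Set.mem_compl_iff]
        tauto
      have hGE2 : S.GEpat B (insert m I) (insert m sub) = S.GEpat B I sub ∩ S.Gev B m := by
        have hset : insert m I \ insert m sub = I \ sub := by
          ext x
          simp only [Finset.mem_sdiff, Finset.mem_insert]
          constructor
          · rintro ⟨h1 | h1, h2⟩
            · exact absurd (Or.inl h1) h2
            · exact ⟨h1, fun hc => h2 (Or.inr hc)⟩
          · rintro ⟨h1, h2⟩
            exact ⟨Or.inr h1, by
              rintro (rfl | hc)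
              · exact hm h1
              · exact h2 hc⟩
        rw [GEpat, GEpat, hset, Finset.set_biInter_insert]
        ext ω
        simp only [Set.mem_inter_iff]
        tauto
      have hfac := S.GE_factor B hB hindep I sub hsub m hm
      rw [hGE1, hGE2, hfac.2, hfac.1, Finset.prod_insert hmsub]
      have hμm : S.μ (S.Gev B m) ≤ 1 := prob_le_one
      have hcompl : S.μ ((S.Gev B m)ᶜ) = 1 - S.μ (S.Gev B m) :=
        prob_compl_eq_one_sub (S.meas_Gev B m)
      have hlow : ENNReal.ofReal (q ^ S.nW) ≤ S.μ (S.Gev B m) :=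
        S.Gev_lower B hB hq0 hindep hconn m
      calc S.μ (S.GEpat B I sub) * S.μ ((S.Gev B m)ᶜ) * ∏ ℓ ∈ sub, (1 - d ℓ) +
            S.μ (S.GEpat B I sub) * S.μ (S.Gev B m) * ((1 - d m) * ∏ ℓ ∈ sub, (1 - d ℓ))
          = (S.μ (S.GEpat B I sub) * ∏ ℓ ∈ sub, (1 - d ℓ)) *
              ((1 - S.μ (S.Gev B m)) + S.μ (S.Gev B m) * (1 - d m)) := by
            rw [hcompl]; ring
        _ ≤ (S.μ (S.GEpat B I sub) * ∏ ℓ ∈ sub, (1 - d ℓ)) *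
              (1 - ENNReal.ofReal (q ^ S.nW) * d m) :=
            mul_le_mul_right (ennreal_step hμm (hd m) hlow) _
    calc ∑ sub ∈ I.powerset, S.μ (S.GEpat B (insert m I) sub) * ∏ ℓ ∈ sub, (1 - d ℓ) +
          ∑ sub ∈ I.powerset,
            S.μ (S.GEpat B (insert m I) (insert m sub)) * ∏ ℓ ∈ insert m sub, (1 - d ℓ)
        = ∑ sub ∈ I.powerset,
            (S.μ (S.GEpat B (insert m I) sub) * ∏ ℓ ∈ sub, (1 - d ℓ) +
             S.μ (S.GEpat B (insert m I) (insert m sub)) * ∏ ℓ ∈ insert m sub, (1 - d ℓ)) := by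
          rw [← Finset.sum_add_distrib]
      _ ≤ ∑ sub ∈ I.powerset, (S.μ (S.GEpat B I sub) * ∏ ℓ ∈ sub, (1 - d ℓ)) *
            (1 - ENNReal.ofReal (q ^ S.nW) * d m) := Finset.sum_le_sum hstep
      _ = (∑ sub ∈ I.powerset, S.μ (S.GEpat B I sub) * ∏ ℓ ∈ sub, (1 - d ℓ)) *
            (1 - ENNReal.ofReal (q ^ S.nW) * d m) := by rw [← Finset.sum_mul]
      _ ≤ (∏ ℓ ∈ I, (1 - ENNReal.ofReal (q ^ S.nW) * d ℓ)) *
            (1 - ENNReal.ofReal (q ^ S.nW) * d m) := mul_le_mul_left ih _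
      _ = (1 - ENNReal.ofReal (q ^ S.nW) * d m) * ∏ ℓ ∈ I,
            (1 - ENNReal.ofReal (q ^ S.nW) * d ℓ) := mul_comm _ _

lemma Cev_compl_inter_Gev_subset (B ℓ : ℕ) : (S.Cev B ℓ)ᶜ ∩ S.Gev B ℓ ⊆ S.Kev B ℓ := by
  intro ω hω
  obtain ⟨hc, hg⟩ := hω
  rw [Set.mem_compl_iff, Cev, Set.mem_iUnion] at hc
  rw [Gev, Set.mem_setOf_eq] at hg
  rw [Kev, Set.mem_iUnion]
  refine ⟨S.blkOf B ℓ ω, rfl, ?_⟩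
  intro hDev
  exact hc ⟨S.blkOf B ℓ ω, Set.mem_iUnion.2 ⟨hg, rfl, hDev⟩⟩

/-- The master estimate: the probability that no epoch in `I` contracts. -/
lemma main_bound (B : ℕ) (hB : 1 ≤ B) {q : ℝ} (hq0 : 0 ≤ q)
    (hmono : ∀ k, S.P (k + 1) ≤ S.P k)
    (hindep : iIndepSet (fun m : ℕ => S.Aset B m) S.μ)
    (hconn : ∀ m : ℕ, ENNReal.ofReal q ≤ S.μ (S.Aset B m)) (I : Finset ℕ) :
    S.μ (⋂ ℓ ∈ I, (S.Cev B ℓ)ᶜ) ≤ ∏ ℓ ∈ I, (1 - ENNReal.ofReal (q ^ S.nW) *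
      ENNReal.ofReal (S.P ((ℓ + 1) * S.blkT B) ^ (S.n - 1))) := by
  classical
  haveI := S.hμ
  set X := ⋂ ℓ ∈ I, (S.Cev B ℓ)ᶜ with hX
  have hXmeas : MeasurableSet X :=
    MeasurableSet.biInter (Finset.countable_toSet _) fun ℓ _ => (S.meas_Cev B ℓ).compl
  rw [S.pattern_partition B I X hXmeas]
  have hterm : ∀ sub ∈ I.powerset, S.μ (X ∩ S.GEpat B I sub) ≤
      S.μ (S.GEpat B I sub) * ∏ ℓ ∈ sub,
        (1 - ENNReal.ofReal (S.P ((ℓ + 1) * S.blkT B) ^ (S.n - 1))) := by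
    intro sub hsub
    rw [Finset.mem_powerset] at hsub
    have hsubset : X ∩ S.GEpat B I sub ⊆ S.GEpat B I sub ∩ ⋂ ℓ ∈ sub, S.Kev B ℓ := by
      intro ω hω
      obtain ⟨hωX, hωG⟩ := hω
      refine ⟨hωG, Set.mem_iInter₂.2 fun ℓ hℓ => ?_⟩
      apply S.Cev_compl_inter_Gev_subset B ℓ
      exact ⟨Set.mem_iInter₂.1 hωX ℓ (hsub hℓ), Set.mem_iInter₂.1 hωG.1 ℓ hℓ⟩
    calc S.μ (X ∩ S.GEpat B I sub)
        ≤ S.μ (S.GEpat B I sub ∩ ⋂ ℓ ∈ sub, S.Kev B ℓ) := measure_mono hsubset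
      _ ≤ S.μ (S.GEpat B I sub) * ∏ ℓ ∈ sub,
            (1 - ENNReal.ofReal (S.P ((ℓ + 1) * S.blkT B) ^ (S.n - 1))) :=
          S.chi_peel B hB hmono sub _ (S.comap_GEpat B I sub)
  calc ∑ sub ∈ I.powerset, S.μ (X ∩ S.GEpat B I sub)
      ≤ ∑ sub ∈ I.powerset, S.μ (S.GEpat B I sub) * ∏ ℓ ∈ sub,
          (1 - ENNReal.ofReal (S.P ((ℓ + 1) * S.blkT B) ^ (S.n - 1))) :=
        Finset.sum_le_sum hterm
    _ ≤ ∏ ℓ ∈ I, (1 - ENNReal.ofReal (q ^ S.nW) *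
          ENNReal.ofReal (S.P ((ℓ + 1) * S.blkT B) ^ (S.n - 1))) :=
        S.GE_sum_bound B hB hq0 hindep hconn _
          (fun ℓ => ENNReal.ofReal_le_one.2 (by
            have h0 := S.hP0 ((ℓ + 1) * S.blkT B)
            have h1 := S.hP1 ((ℓ + 1) * S.blkT B)
            calc S.P ((ℓ + 1) * S.blkT B) ^ (S.n - 1) ≤ 1 ^ (S.n - 1) :=
                pow_le_pow_left₀ h0 (le_of_lt h1) _
              _ = 1 := one_pow _)) I

end RandConsensus
namespace RandConsensus

variable {Ω : Type*} [MeasurableSpace Ω] (S : RandConsensus Ω)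

lemma u_not_summable (B : ℕ) (hB : 1 ≤ B) (hmono : ∀ k, S.P (k + 1) ≤ S.P k)
    (hsum : ¬ Summable (fun k => S.P k ^ (S.n - 1))) {q : ℝ} (hq0 : 0 < q) :
    ¬ Summable (fun ℓ => q ^ S.nW * S.P ((ℓ + 1) * S.blkT B) ^ (S.n - 1)) := by
  intro hS
  set T := S.blkT B with hTdef
  have hT : 0 < T := S.blkT_pos B hB
  have hc : (q : ℝ) ^ S.nW ≠ 0 := pow_ne_zero _ hq0.ne'
  have h1 : Summable (fun ℓ => S.P ((ℓ + 1) * T) ^ (S.n - 1)) :=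
    (summable_mul_left_iff hc).1 hS
  set g : ℕ → ℝ := fun ℓ => S.P (T * ℓ) ^ (S.n - 1) with hgdef
  have hg0 : ∀ ℓ, 0 ≤ g ℓ := fun ℓ => pow_nonneg (S.hP0 _) _
  have h1' : Summable (fun ℓ => g (ℓ + 1)) := by
    have he : (fun ℓ => g (ℓ + 1)) = (fun ℓ => S.P ((ℓ + 1) * T) ^ (S.n - 1)) := by
      funext ℓ
      simp [hgdef, Nat.mul_comm]
    rw [he]
    exact h1
  have hg : Summable g := (_root_.summable_nat_add_iff 1).1 h1'
  apply hsum
  apply summable_of_sum_range_le (c := (T : ℝ) * ∑' ℓ, g ℓ)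
    (fun k => pow_nonneg (S.hP0 k) _)
  intro N
  have hblock : ∀ N', ∑ k ∈ Finset.range (T * N'), S.P k ^ (S.n - 1) =
      ∑ ℓ ∈ Finset.range N', ∑ j ∈ Finset.range T, S.P (T * ℓ + j) ^ (S.n - 1) := by
    intro N'
    induction N' with
    | zero => simp
    | succ M ihM =>
      rw [Nat.mul_succ, Finset.sum_range_add, ihM, Finset.sum_range_succ]
  have hsum_le : ∀ ℓ, ∑ j ∈ Finset.range T, S.P (T * ℓ + j) ^ (S.n - 1) ≤ (T : ℝ) * g ℓ := by
    intro ℓ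
    have := Finset.sum_le_card_nsmul (Finset.range T)
      (fun j => S.P (T * ℓ + j) ^ (S.n - 1)) (g ℓ)
      (fun j _ => pow_le_pow_left₀ (S.hP0 _)
        (S.P_antitone hmono (Nat.le_add_right (T * ℓ) j)) _)
    rw [Finset.card_range] at this
    simpa [nsmul_eq_mul] using this
  calc ∑ k ∈ Finset.range N, S.P k ^ (S.n - 1)
      ≤ ∑ k ∈ Finset.range (T * N), S.P k ^ (S.n - 1) := by
        apply Finset.sum_le_sum_of_subset_of_nonneg
        · apply Finset.range_subset_range.2
          calc N = 1 * N := (one_mul N).symm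
            _ ≤ T * N := Nat.mul_le_mul_right N hT
        · exact fun k _ _ => pow_nonneg (S.hP0 k) _
    _ = ∑ ℓ ∈ Finset.range N, ∑ j ∈ Finset.range T, S.P (T * ℓ + j) ^ (S.n - 1) := hblock N
    _ ≤ ∑ ℓ ∈ Finset.range N, (T : ℝ) * g ℓ := Finset.sum_le_sum fun ℓ _ => hsum_le ℓ
    _ = (T : ℝ) * ∑ ℓ ∈ Finset.range N, g ℓ := by rw [Finset.mul_sum]
    _ ≤ (T : ℝ) * ∑' ℓ, g ℓ := by
        apply mul_le_mul_of_nonneg_left _ (by positivity)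
        exact Summable.sum_le_tsum _ (fun ℓ _ => hg0 ℓ) hg

lemma tail_zero (B : ℕ) (hB : 1 ≤ B) {q : ℝ} (hq0 : 0 < q) (hq1 : q < 1)
    (hmono : ∀ k, S.P (k + 1) ≤ S.P k)
    (hsum : ¬ Summable (fun k => S.P k ^ (S.n - 1)))
    (hindep : iIndepSet (fun m : ℕ => S.Aset B m) S.μ)
    (hconn : ∀ m : ℕ, ENNReal.ofReal q ≤ S.μ (S.Aset B m)) (L : ℕ) :
    S.μ (⋂ ℓ ∈ Set.Ici L, (S.Cev B ℓ)ᶜ) = 0 := by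
  haveI := S.hμ
  set u : ℕ → ℝ := fun ℓ => q ^ S.nW * S.P ((ℓ + 1) * S.blkT B) ^ (S.n - 1) with hu
  have hu0 : ∀ ℓ, 0 ≤ u ℓ :=
    fun ℓ => mul_nonneg (pow_nonneg hq0.le _) (pow_nonneg (S.hP0 _) _)
  have hu1 : ∀ ℓ, u ℓ ≤ 1 := by
    intro ℓ
    have h1 : q ^ S.nW ≤ 1 := pow_le_one₀ hq0.le hq1.le
    have h2 : S.P ((ℓ + 1) * S.blkT B) ^ (S.n - 1) ≤ 1 :=
      pow_le_one₀ (S.hP0 _) (S.hP1 _).le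
    have h3 : 0 ≤ S.P ((ℓ + 1) * S.blkT B) ^ (S.n - 1) := pow_nonneg (S.hP0 _) _
    calc u ℓ ≤ 1 * 1 := mul_le_mul h1 h2 h3 zero_le_one
      _ = 1 := mul_one 1
  have hdiv := S.u_not_summable B hB hmono hsum hq0
  have htend : Filter.Tendsto (fun M => ∑ i ∈ Finset.range M, u i) atTop atTop :=
    (not_summable_iff_tendsto_nat_atTop_of_nonneg hu0).1 hdiv
  have hbound : ∀ M : ℕ, S.μ (⋂ ℓ ∈ Set.Ici L, (S.Cev B ℓ)ᶜ) ≤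
      ENNReal.ofReal (Real.exp ((∑ i ∈ Finset.range L, u i) -
        ∑ i ∈ Finset.range (M + 1), u i)) := by
    intro M
    have hsub : (⋂ ℓ ∈ Set.Ici L, (S.Cev B ℓ)ᶜ) ⊆ ⋂ ℓ ∈ Finset.Icc L M, (S.Cev B ℓ)ᶜ := by
      intro ω h
      exact Set.mem_iInter₂.2 fun ℓ hℓ => Set.mem_iInter₂.1 h ℓ (Finset.mem_Icc.1 hℓ).1
    refine le_trans (measure_mono hsub) (le_trans
      (S.main_bound B hB hq0.le hmono hindep hconn (Finset.Icc L M)) ?_)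
    have hconv : ∀ ℓ, (1 : ENNReal) - ENNReal.ofReal (q ^ S.nW) *
        ENNReal.ofReal (S.P ((ℓ + 1) * S.blkT B) ^ (S.n - 1)) =
        ENNReal.ofReal (1 - u ℓ) := by
      intro ℓ
      rw [← ENNReal.ofReal_mul (pow_nonneg hq0.le _)]
      rw [ENNReal.ofReal_sub 1 (hu0 ℓ), ENNReal.ofReal_one]
    have hreal : ∏ ℓ ∈ Finset.Icc L M, (1 - u ℓ) ≤
        Real.exp ((∑ i ∈ Finset.range L, u i) - ∑ i ∈ Finset.range (M + 1), u i) := by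
      have hsplit : (∑ i ∈ Finset.range (M + 1), u i) - ∑ i ∈ Finset.range L, u i ≤
          ∑ ℓ ∈ Finset.Icc L M, u ℓ := by
        rcases le_or_gt L (M + 1) with h | h
        · rw [← Finset.Ico_add_one_right_eq_Icc, Finset.sum_Ico_eq_sub _ h]
        · have hempty : Finset.Icc L M = ∅ := by
            apply Finset.Icc_eq_empty
            omega
          rw [hempty, Finset.sum_empty]
          have : ∑ i ∈ Finset.range (M + 1), u i ≤ ∑ i ∈ Finset.range L, u i := by
            apply Finset.sum_le_sum_of_subset_of_nonneg
              (Finset.range_subset_range.2 (by omega)) (fun k _ _ => hu0 k)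
          linarith
      calc ∏ ℓ ∈ Finset.Icc L M, (1 - u ℓ)
          ≤ ∏ ℓ ∈ Finset.Icc L M, Real.exp (-(u ℓ)) := by
            apply Finset.prod_le_prod (fun ℓ _ => by linarith [hu1 ℓ])
            intro ℓ _
            have := Real.add_one_le_exp (-(u ℓ))
            linarith
        _ = Real.exp (∑ ℓ ∈ Finset.Icc L M, -(u ℓ)) := (Real.exp_sum _ _).symm
        _ = Real.exp (-∑ ℓ ∈ Finset.Icc L M, u ℓ) := by rw [Finset.sum_neg_distrib]
        _ ≤ Real.exp ((∑ i ∈ Finset.range L, u i) - ∑ i ∈ Finset.range (M + 1), u i) := by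
            apply Real.exp_le_exp.2
            linarith
    calc ∏ ℓ ∈ Finset.Icc L M, ((1 : ENNReal) - ENNReal.ofReal (q ^ S.nW) *
          ENNReal.ofReal (S.P ((ℓ + 1) * S.blkT B) ^ (S.n - 1)))
        = ∏ ℓ ∈ Finset.Icc L M, ENNReal.ofReal (1 - u ℓ) :=
          Finset.prod_congr rfl fun ℓ _ => hconv ℓ
      _ = ENNReal.ofReal (∏ ℓ ∈ Finset.Icc L M, (1 - u ℓ)) :=
          (ENNReal.ofReal_prod_of_nonneg (fun ℓ _ => by linarith [hu1 ℓ])).symm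
      _ ≤ ENNReal.ofReal (Real.exp ((∑ i ∈ Finset.range L, u i) -
            ∑ i ∈ Finset.range (M + 1), u i)) := ENNReal.ofReal_le_ofReal hreal
  have hlim : Filter.Tendsto (fun M : ℕ => ENNReal.ofReal
      (Real.exp ((∑ i ∈ Finset.range L, u i) - ∑ i ∈ Finset.range (M + 1), u i)))
      atTop (nhds 0) := by
    have h1 : Filter.Tendsto (fun M : ℕ => ∑ i ∈ Finset.range (M + 1), u i) atTop atTop :=
      htend.comp (Filter.tendsto_add_atTop_nat 1)
    have h2 : Filter.Tendsto (fun M : ℕ => (∑ i ∈ Finset.range L, u i) -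
        ∑ i ∈ Finset.range (M + 1), u i) atTop atBot := by
      apply Filter.tendsto_atBot_add_const_left
      exact Filter.tendsto_neg_atBot_iff.2 h1
    have h3 := Real.tendsto_exp_atBot.comp h2
    have h4 : Filter.Tendsto (fun M : ℕ => Real.exp ((∑ i ∈ Finset.range L, u i) -
        ∑ i ∈ Finset.range (M + 1), u i)) atTop (nhds 0) := h3
    have := (ENNReal.continuous_ofReal.tendsto 0).comp h4
    simpa [Function.comp_def] using this
  have hle : S.μ (⋂ ℓ ∈ Set.Ici L, (S.Cev B ℓ)ᶜ) ≤ 0 := ge_of_tendsto' hlim hbound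
  exact le_antisymm hle zero_le

lemma Cev_contract (B : ℕ) (hB : 1 ≤ B) (ℓ : ℕ) (ω : Ω) (x0 : Fin S.n → ℝ)
    (hω : ω ∈ S.Cev B ℓ) :
    S.spread (S.state x0 ((ℓ + 1) * S.blkT B) ω) ≤
      (1 - S.η ^ S.blkT B / 2) * S.spread (S.state x0 (ℓ * S.blkT B) ω) := by
  rw [Cev, Set.mem_iUnion] at hω
  obtain ⟨g, hg⟩ := hω
  rw [Set.mem_iUnion] at hg
  obtain ⟨hgood, hmem⟩ := hg
  exact S.plan_contract hB hgood ℓ ω x0 hmem.1 (fun p hp => Set.mem_iInter₂.1 hmem.2 p hp)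

end RandConsensus
/-- Corollary 1 of the paper: for stochastically uniformly quasi-strongly connected
graph processes with nonincreasing `P_k`, `∑ P_k^{n-1} = ∞` implies global a.s.
consensus. -/
theorem consensus_uniformly_qsc_monotone {Ω : Type*} [MeasurableSpace Ω]
    (S : RandConsensus Ω) (B : ℕ) (hB : 1 ≤ B) (q : ℝ) (hq0 : 0 < q) (hq1 : q < 1)
    (hindep : iIndepSet
      (fun m : ℕ => {ω | IsQSC (S.jointRel ω (Set.Icc (m * B) ((m + 1) * B - 1)))}) S.μ)
    (hconn : ∀ m : ℕ, ENNReal.ofReal q ≤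
      S.μ {ω | IsQSC (S.jointRel ω (Set.Icc (m * B) ((m + 1) * B - 1)))})
    (hmono : ∀ k, S.P (k + 1) ≤ S.P k)
    (hsum : ¬ Summable (fun k => S.P k ^ (S.n - 1))) :
    S.consensus := by
  intro x0
  haveI := S.hμ
  have hindep' : iIndepSet (fun m : ℕ => S.Aset B m) S.μ := hindep
  have hconn' : ∀ m : ℕ, ENNReal.ofReal q ≤ S.μ (S.Aset B m) := hconn
  set T := S.blkT B with hTdef
  set N : Set Ω := ⋃ L : ℕ, ⋂ ℓ ∈ Set.Ici L, (S.Cev B ℓ)ᶜ with hN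
  have hNmeas : MeasurableSet N :=
    MeasurableSet.iUnion fun L => MeasurableSet.biInter (Set.to_countable _)
      fun ℓ _ => (S.meas_Cev B ℓ).compl
  have hN0 : S.μ N = 0 :=
    measure_iUnion_null fun L => S.tail_zero B hB hq0 hq1 hmono hsum hindep' hconn' L
  have hsubset : Nᶜ ⊆ {ω | Filter.Tendsto (fun k => S.spread (S.state x0 k ω))
      Filter.atTop (nhds 0)} := by
    intro ω hω
    rw [Set.mem_compl_iff, hN, Set.mem_iUnion] at hω
    push_neg at hω
    have hio : ∀ L, ∃ ℓ, L ≤ ℓ ∧ ω ∈ S.Cev B ℓ := by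
      intro L
      by_contra hc
      push_neg at hc
      exact (hω L) (Set.mem_iInter₂.2 fun ℓ hℓ => hc ℓ hℓ)
    set lam : ℝ := 1 - S.η ^ T / 2 with hlam
    have hη1 := S.eta_le_one
    have hηpow : 0 < S.η ^ T := pow_pos S.hη T
    have hηpow1 : S.η ^ T ≤ 1 := pow_le_one₀ S.hη.le hη1
    have hlam0 : 0 ≤ lam := by rw [hlam]; linarith
    have hlam1 : lam < 1 := by rw [hlam]; linarith
    have hkey : ∀ j : ℕ, ∃ k : ℕ, S.spread (S.state x0 k ω) ≤ lam ^ j * S.spread x0 := by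
      intro j
      induction j with
      | zero =>
        refine ⟨0, ?_⟩
        rw [pow_zero, one_mul]
        exact le_of_eq rfl
      | succ j ih =>
        obtain ⟨k, hk⟩ := ih
        obtain ⟨ℓ, hℓk, hCev⟩ := hio k
        have hkT : k ≤ ℓ * T :=
          le_trans hℓk (Nat.le_mul_of_pos_right ℓ (S.blkT_pos B hB))
        refine ⟨(ℓ + 1) * T, ?_⟩
        have h1 := S.Cev_contract B hB ℓ ω x0 hCev
        have h2 : S.spread (S.state x0 (ℓ * T) ω) ≤ S.spread (S.state x0 k ω) :=
          S.spread_state_mono x0 ω hkT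
        calc S.spread (S.state x0 ((ℓ + 1) * T) ω)
            ≤ lam * S.spread (S.state x0 (ℓ * T) ω) := h1
          _ ≤ lam * (lam ^ j * S.spread x0) :=
              mul_le_mul_of_nonneg_left (le_trans h2 hk) hlam0
          _ = lam ^ (j + 1) * S.spread x0 := by ring
    rw [Set.mem_setOf_eq, Metric.tendsto_atTop]
    intro ε hε
    have htp : Filter.Tendsto (fun j : ℕ => lam ^ j * S.spread x0) Filter.atTop (nhds 0) := by
      have h := tendsto_pow_atTop_nhds_zero_of_lt_one hlam0 hlam1
      have := h.mul_const (S.spread x0)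
      simpa using this
    obtain ⟨j, hj⟩ := (htp.eventually_lt_const hε).exists
    obtain ⟨k0, hk0⟩ := hkey j
    refine ⟨k0, fun m hm => ?_⟩
    have h1 : S.spread (S.state x0 m ω) ≤ S.spread (S.state x0 k0 ω) :=
      S.spread_state_mono x0 ω hm
    have h2 : 0 ≤ S.spread (S.state x0 m ω) := S.spread_nonneg _
    rw [Real.dist_eq, sub_zero, abs_of_nonneg h2]
    calc S.spread (S.state x0 m ω) ≤ S.spread (S.state x0 k0 ω) := h1
      _ ≤ lam ^ j * S.spread x0 := hk0
      _ < ε := hj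
  have h1 : S.μ Nᶜ = 1 := by
    rw [prob_compl_eq_one_sub hNmeas, hN0, tsub_zero]
  exact le_antisymm prob_le_one (h1 ▸ measure_mono hsubset)
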